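/- arXiv:2602.17361 — 8 statements merged into one kernel-verified Lean document; each statement's English description precedes it below -/
import Mathlib

section
/- The weighted bilinear form ⟨X,Y⟩_ρ := tr(ρ(XY+YX)/2) is a genuine (positive-definite) inner product on the real vector space 𝒳 of Hermitian matrices X satisfying ⟨k|X|l⟩ = 0 whenever p_k = p_l = 0, where {|k⟩} is an eigenbasis of ρ with eigenvalues p_k. -/
open Matrix BigOperators Finset
open scoped Classical

namespace KST

variable {d : ℕ}

/-- Weighted inner product ⟨X,Y⟩_ρ = Re tr(ρ(XY+YX))/2. -/
noncomputable def wip (ρ X Y : Matrix (Fin d) (Fin d) ℂ) : ℝ :=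
  (((ρ * (X * Y + Y * X)).trace) / 2).re

/-- Membership in 𝒳: Hermitian with ⟨k|X|l⟩ = 0 whenever p_k = p_l = 0. -/
def memX (p : Fin d → ℝ) (v : Fin d → (Fin d → ℂ)) (X : Matrix (Fin d) (Fin d) ℂ) : Prop :=
  X.IsHermitian ∧ ∀ k l, p k = 0 → p l = 0 → star (v k) ⬝ᵥ X.mulVec (v l) = 0

/-- The superoperator R_ρ(X) = (ρX + Xρ)/2. -/
noncomputable def Rop (ρ : Matrix (Fin d) (Fin d) ℂ) (X : Matrix (Fin d) (Fin d) ℂ) :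
    Matrix (Fin d) (Fin d) ℂ :=
  (1/2 : ℂ) • (ρ * X + X * ρ)

/-- The operator i[ρ,H]. -/
noncomputable def comm (ρ H : Matrix (Fin d) (Fin d) ℂ) : Matrix (Fin d) (Fin d) ℂ :=
  Complex.I • (ρ * H - H * ρ)

/-- Krylov subspace 𝒦_n = span_ℝ {R_ρ^k(i[ρ,H]) : 0 ≤ k ≤ n-1}. -/
noncomputable def K (ρ H : Matrix (Fin d) (Fin d) ℂ) (n : ℕ) :
    Submodule ℝ (Matrix (Fin d) (Fin d) ℂ) :=
  Submodule.span ℝ ((fun k => (Rop ρ)^[k] (comm ρ H)) '' (Set.Iio n))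

/-- Quantum Fisher information (spectral formula). -/
noncomputable def FQ (p : Fin d → ℝ) (v : Fin d → (Fin d → ℂ))
    (H : Matrix (Fin d) (Fin d) ℂ) : ℝ :=
  2 * ∑ k, ∑ l, if 0 < p k + p l then
    (p k - p l)^2 / (p k + p l) * Complex.normSq (star (v k) ⬝ᵥ H.mulVec (v l)) else 0

/-- T_k = tr(i[ρ,H] R_ρ^k(i[ρ,H])). -/
noncomputable def Tk (ρ H : Matrix (Fin d) (Fin d) ℂ) (k : ℕ) : ℝ :=
  ((comm ρ H * (Rop ρ)^[k] (comm ρ H)).trace).re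

/-- P is the orthogonal projection of L onto 𝒦_n w.r.t. ⟨·,·⟩_ρ. -/
def IsProj (ρ H : Matrix (Fin d) (Fin d) ℂ) (n : ℕ)
    (L P : Matrix (Fin d) (Fin d) ℂ) : Prop :=
  P ∈ K ρ H n ∧ ∀ Y ∈ K ρ H n, wip ρ (L - P) Y = 0

/-- The weighted bilinear form is a genuine inner product on 𝒳. -/
theorem stmt0 {d : ℕ} (ρ : Matrix (Fin d) (Fin d) ℂ) (p : Fin d → ℝ) (v : Fin d → (Fin d → ℂ))
    (hρ : ρ = ∑ k, (p k : ℂ) • vecMulVec (v k) (star (v k)))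
    (horth : ∀ k l, star (v k) ⬝ᵥ v l = (if k = l then 1 else 0))
    (hppos : ∀ k, 0 ≤ p k) (hptr : ∑ k, p k = 1) :
    (∀ X Y, memX p v X → memX p v Y → wip ρ X Y = wip ρ Y X) ∧
    (∀ X X' Y : Matrix (Fin d) (Fin d) ℂ,
      wip ρ (X + X') Y = wip ρ X Y + wip ρ X' Y) ∧
    (∀ (c : ℝ) (X Y : Matrix (Fin d) (Fin d) ℂ),
      wip ρ ((c : ℂ) • X) Y = c * wip ρ X Y) ∧
    (∀ X, memX p v X → 0 ≤ wip ρ X X) ∧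
    (∀ X, memX p v X → wip ρ X X = 0 → X = 0) := by
  classical
  set V : Matrix (Fin d) (Fin d) ℂ := Matrix.of fun i k => v k i with hVdef
  set D : Matrix (Fin d) (Fin d) ℂ := Matrix.diagonal (fun k => (p k : ℂ)) with hDdef
  have hVHV : Vᴴ * V = 1 := by
    ext k l
    have := horth k l
    simpa [hVdef, Matrix.mul_apply, Matrix.conjTranspose_apply, dotProduct,
      Matrix.one_apply] using this
  have hVVH : V * Vᴴ = 1 := mul_eq_one_comm.mp hVHV
  have hρ' : ρ = V * D * Vᴴ := by
    rw [hρ]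
    ext i j
    simp only [hVdef, hDdef, Matrix.mul_apply, Matrix.diagonal, Matrix.sum_apply,
      Matrix.smul_apply, vecMulVec_apply, Matrix.conjTranspose_apply, Matrix.of_apply,
      Pi.star_apply, RCLike.star_def, smul_eq_mul, Finset.sum_ite_eq, Finset.mem_univ,
      if_true]
    refine Finset.sum_congr rfl fun x _ => ?_
    rw [Finset.sum_eq_single x (fun b _ hb => by simp [hb]) (by simp)]
    simp only [if_true]
    ring
  have hM : ∀ (X : Matrix (Fin d) (Fin d) ℂ) k l,
      (Vᴴ * X * V) k l = star (v k) ⬝ᵥ X.mulVec (v l) := by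
    intro X k l
    simp only [hVdef, Matrix.mul_apply, Matrix.conjTranspose_apply, dotProduct,
      Matrix.mulVec, Matrix.of_apply, Pi.star_apply, RCLike.star_def]
    simp only [Finset.sum_mul, Finset.mul_sum]
    rw [Finset.sum_comm]
    exact Finset.sum_congr rfl fun i _ => Finset.sum_congr rfl fun j _ => by ring
  have hherm : ∀ X : Matrix (Fin d) (Fin d) ℂ, X.IsHermitian →
      ∀ k l, (Vᴴ * X * V) l k = starRingEnd ℂ ((Vᴴ * X * V) k l) := by
    intro X hX k l
    have hMh : (Vᴴ * X * V)ᴴ = Vᴴ * X * V := by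
      simp only [Matrix.conjTranspose_mul, Matrix.conjTranspose_conjTranspose,
        Matrix.mul_assoc]
      rw [hX.eq]
    conv_lhs => rw [← hMh]
    simp [Matrix.conjTranspose_apply]
  have htraceD : ∀ N : Matrix (Fin d) (Fin d) ℂ,
      (D * N).trace = ∑ k, (p k : ℂ) * N k k := by
    intro N
    simp [hDdef, Matrix.trace, Matrix.diag, Matrix.diagonal_mul]
  have hdiag : ∀ X : Matrix (Fin d) (Fin d) ℂ, X.IsHermitian →
      wip ρ X X = ∑ k, ∑ l, p k * Complex.normSq ((Vᴴ * X * V) k l) := by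
    intro X hX
    have key : (Vᴴ * X * V) * (Vᴴ * X * V) = Vᴴ * (X * (X * V)) := by
      simp only [Matrix.mul_assoc]
      rw [← Matrix.mul_assoc V Vᴴ, hVVH, Matrix.one_mul]
    have htr : ((V * D * Vᴴ) * (X * X)).trace
        = (D * ((Vᴴ * X * V) * (Vᴴ * X * V))).trace := by
      rw [show V * D * Vᴴ * (X * X) = V * (D * (Vᴴ * (X * X))) from by
        simp only [Matrix.mul_assoc], Matrix.trace_mul_comm, key]
      simp only [Matrix.mul_assoc]
    have h2 : ρ * (X * X + X * X) = ρ * (X * X) + ρ * (X * X) := by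
      rw [Matrix.mul_add]
    have hsum : (D * ((Vᴴ * X * V) * (Vᴴ * X * V))).trace
        = ((∑ k, ∑ l, p k * Complex.normSq ((Vᴴ * X * V) k l) : ℝ) : ℂ) := by
      rw [htraceD, Complex.ofReal_sum]
      refine Finset.sum_congr rfl fun k _ => ?_
      rw [Matrix.mul_apply, Finset.mul_sum, Complex.ofReal_sum]
      refine Finset.sum_congr rfl fun l _ => ?_
      rw [hherm X hX k l, Complex.mul_conj]
      simp [Complex.ofReal_mul]
    rw [wip, h2, Matrix.trace_add, hρ', htr, hsum]
    rw [show (((∑ k, ∑ l, p k * Complex.normSq ((Vᴴ * X * V) k l) : ℝ) : ℂ)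
        + ((∑ k, ∑ l, p k * Complex.normSq ((Vᴴ * X * V) k l) : ℝ) : ℂ)) / 2
        = ((∑ k, ∑ l, p k * Complex.normSq ((Vᴴ * X * V) k l) : ℝ) : ℂ) from by ring]
    exact Complex.ofReal_re _
  refine ⟨?_, ?_, ?_, ?_, ?_⟩
  · intro X Y _ _
    simp [wip, add_comm]
  · intro X X' Y
    have h : ρ * ((X + X') * Y + Y * (X + X'))
        = ρ * (X * Y + Y * X) + ρ * (X' * Y + Y * X') := by
      noncomm_ring
    simp [wip, h, Matrix.trace_add, add_div]
  · intro c X Y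
    have h : ρ * (((c : ℂ) • X) * Y + Y * ((c : ℂ) • X))
        = (c : ℂ) • (ρ * (X * Y + Y * X)) := by
      simp [Matrix.smul_mul, Matrix.mul_smul, smul_add, Matrix.mul_add]
    rw [wip, wip, h]
    simp [Matrix.trace_smul, smul_eq_mul, mul_div_assoc, Complex.re_ofReal_mul]
  · intro X hX
    rw [hdiag X hX.1]
    exact Finset.sum_nonneg fun k _ => Finset.sum_nonneg fun l _ =>
      mul_nonneg (hppos k) (Complex.normSq_nonneg _)
  · intro X hX h0
    rw [hdiag X hX.1] at h0
    have hterm : ∀ k l, p k * Complex.normSq ((Vᴴ * X * V) k l) = 0 := by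
      intro k l
      have h1 := (Finset.sum_eq_zero_iff_of_nonneg (fun k _ =>
        Finset.sum_nonneg fun l _ =>
          mul_nonneg (hppos k) (Complex.normSq_nonneg _))).mp h0 k (Finset.mem_univ k)
      exact (Finset.sum_eq_zero_iff_of_nonneg (fun l _ =>
        mul_nonneg (hppos k) (Complex.normSq_nonneg _))).mp h1 l (Finset.mem_univ l)
    have hMz : ∀ k l, p k ≠ 0 → (Vᴴ * X * V) k l = 0 := by
      intro k l hk
      have := hterm k l
      rcases mul_eq_zero.mp this with h | h
      · exact absurd h hk
      · exact Complex.normSq_eq_zero.mp h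
    have hMzero : Vᴴ * X * V = 0 := by
      ext k l
      rw [Matrix.zero_apply]
      by_cases hk : p k = 0
      · by_cases hl : p l = 0
        · rw [hM X k l]; exact hX.2 k l hk hl
        · rw [hherm X hX.1 l k, hMz l k hl, map_zero]
      · exact hMz k l hk
    have hXrec : X = V * (Vᴴ * X * V) * Vᴴ := by
      rw [show V * (Vᴴ * X * V) * Vᴴ = (V * Vᴴ) * (X * (V * Vᴴ)) from by
        simp only [Matrix.mul_assoc], hVVH, Matrix.one_mul, Matrix.mul_one]
    rw [hXrec, hMzero, Matrix.mul_zero, Matrix.zero_mul]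

end KST
end

section
/- The symmetric logarithmic derivative L, defined as the unique element of 𝒳 satisfying R_ρ(L) = i[ρ,H], exists and is unique, and the quantum Fisher information satisfies F_Q = ⟨L,L⟩_ρ = 2 Σ_{p_k+p_l>0} (p_k−p_l)²/(p_k+p_l) |⟨k|H|l⟩|². -/
open Matrix BigOperators Finset
open scoped Classical

namespace KST

variable {d : ℕ}

private lemma aux_cancel (q c h : ℂ) (hq : q ≠ 0) : q * (c / q * h) = c * h := by
  field_simp

private lemma aux_term (a n : ℝ) (q s z : ℂ) (hq : q ≠ 0)
    (hz : z * (starRingEnd ℂ) z = (n : ℂ)) :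
    (a : ℂ) * ((2 * Complex.I * s / q * z) * (2 * Complex.I * (-s) / q * (starRingEnd ℂ) z))
      = (a : ℂ) * (4 * s^2 / q^2 * n) := by
  have h1 : (2 * Complex.I * s / q * z) * (2 * Complex.I * (-s) / q * (starRingEnd ℂ) z)
      = (Complex.I * Complex.I) * (z * (starRingEnd ℂ) z) * (-(4 * s^2) / (q * q)) := by
    ring
  rw [h1, Complex.I_mul_I, hz]
  field_simp

/-- Existence and uniqueness of the SLD in 𝒳, and the QFI formula F_Q = ⟨L,L⟩_ρ. -/
theorem stmt5 {d : ℕ} (ρ : Matrix (Fin d) (Fin d) ℂ) (p : Fin d → ℝ) (v : Fin d → (Fin d → ℂ))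
    (hρ : ρ = ∑ k, (p k : ℂ) • vecMulVec (v k) (star (v k)))
    (horth : ∀ k l, star (v k) ⬝ᵥ v l = (if k = l then 1 else 0))
    (hppos : ∀ k, 0 ≤ p k) (hptr : ∑ k, p k = 1) (H : Matrix (Fin d) (Fin d) ℂ) (hH : H.IsHermitian) :
    (∃! L : Matrix (Fin d) (Fin d) ℂ, memX p v L ∧ Rop ρ L = comm ρ H) ∧
    (∀ L : Matrix (Fin d) (Fin d) ℂ, memX p v L → Rop ρ L = comm ρ H →
      wip ρ L L = FQ p v H) := by
  classical
  set U : Matrix (Fin d) (Fin d) ℂ := Matrix.of (fun i k => v k i) with hUdef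
  set D : Matrix (Fin d) (Fin d) ℂ := Matrix.diagonal (fun k => (p k : ℂ)) with hDdef
  have hUU : Uᴴ * U = 1 := by
    ext k l
    have h := horth k l
    simp only [dotProduct, Pi.star_apply] at h
    simpa [Matrix.mul_apply, Matrix.conjTranspose_apply, Matrix.one_apply, hUdef] using h
  have hUU' : U * Uᴴ = 1 := mul_eq_one_comm.mp hUU
  have hcan1 : ∀ X : Matrix (Fin d) (Fin d) ℂ, U * (Uᴴ * X) = X := fun X => by
    rw [← Matrix.mul_assoc, hUU', Matrix.one_mul]
  have hcan2 : ∀ X : Matrix (Fin d) (Fin d) ℂ, Uᴴ * (U * X) = X := fun X => by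
    rw [← Matrix.mul_assoc, hUU, Matrix.one_mul]
  -- matrix entries in the eigenbasis
  have hentry : ∀ (X : Matrix (Fin d) (Fin d) ℂ) k l,
      (Uᴴ * X * U) k l = star (v k) ⬝ᵥ X.mulVec (v l) := by
    intro X k l
    simp only [Matrix.mul_apply, Matrix.conjTranspose_apply, dotProduct, Matrix.mulVec,
      hUdef, Matrix.of_apply, Pi.star_apply, Finset.sum_mul, Finset.mul_sum]
    rw [Finset.sum_comm]
    exact Finset.sum_congr rfl fun i _ => Finset.sum_congr rfl fun j _ => by ring
  -- diagonalization of ρ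
  have hρU : ρ = U * D * Uᴴ := by
    rw [hρ]
    ext i j
    simp only [Matrix.sum_apply, Matrix.smul_apply, Matrix.vecMulVec_apply, Pi.star_apply,
      smul_eq_mul, Matrix.mul_apply, Matrix.diagonal_apply, Matrix.conjTranspose_apply,
      hUdef, Matrix.of_apply, ite_mul, zero_mul, mul_ite, mul_zero, Finset.sum_ite_eq,
      Finset.sum_ite_eq', Finset.mem_univ, if_true, hDdef]
    exact Finset.sum_congr rfl fun k _ => by ring
  have hback : ∀ X : Matrix (Fin d) (Fin d) ℂ, U * (Uᴴ * X * U) * Uᴴ = X := by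
    intro X
    simp only [Matrix.mul_assoc, hUU', Matrix.mul_one, hcan1, hcan2]
  have hinj : ∀ X Y : Matrix (Fin d) (Fin d) ℂ, Uᴴ * X * U = Uᴴ * Y * U → X = Y := by
    intro X Y h
    have := congrArg (fun M => U * M * Uᴴ) h
    simpa [hback] using this
  have hmul : ∀ A B : Matrix (Fin d) (Fin d) ℂ,
      Uᴴ * (A * B) * U = (Uᴴ * A * U) * (Uᴴ * B * U) := by
    intro A B
    simp only [Matrix.mul_assoc, hUU', hUU, Matrix.mul_one, Matrix.one_mul, hcan1, hcan2]
  have hρhat : Uᴴ * ρ * U = D := by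
    rw [hρU]
    simp only [Matrix.mul_assoc, hUU', hUU, Matrix.mul_one, Matrix.one_mul, hcan1, hcan2]
  set Hh : Matrix (Fin d) (Fin d) ℂ := Uᴴ * H * U with hHhdef
  have hHherm : ∀ k l, (starRingEnd ℂ) (Hh l k) = Hh k l := by
    intro k l
    have hHc : Hhᴴ = Hh := by
      rw [hHhdef, Matrix.conjTranspose_mul, Matrix.conjTranspose_mul,
        Matrix.conjTranspose_conjTranspose, hH.eq, Matrix.mul_assoc]
    calc (starRingEnd ℂ) (Hh l k) = Hhᴴ k l := rfl
      _ = Hh k l := by rw [hHc]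
  -- the equation R_ρ(X) = i[ρ,H] in the eigenbasis
  have hRophat : ∀ X : Matrix (Fin d) (Fin d) ℂ,
      Uᴴ * Rop ρ X * U = (1/2 : ℂ) • (D * (Uᴴ * X * U) + (Uᴴ * X * U) * D) := by
    intro X
    rw [Rop, Matrix.mul_smul, Matrix.smul_mul, Matrix.mul_add, Matrix.add_mul,
      hmul ρ X, hmul X ρ, hρhat]
  have hcommhat : Uᴴ * comm ρ H * U = Complex.I • (D * Hh - Hh * D) := by
    rw [comm, Matrix.mul_smul, Matrix.smul_mul, Matrix.mul_sub, Matrix.sub_mul,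
      hmul ρ H, hmul H ρ, hρhat, hHhdef]
  have heq : ∀ X : Matrix (Fin d) (Fin d) ℂ, Rop ρ X = comm ρ H ↔
      (∀ k l, ((p k + p l : ℝ) : ℂ) * (Uᴴ * X * U) k l
        = 2 * Complex.I * ((p k - p l : ℝ) : ℂ) * Hh k l) := by
    intro X
    constructor
    · intro h k l
      have h2 : Uᴴ * Rop ρ X * U = Uᴴ * comm ρ H * U := by rw [h]
      rw [hRophat, hcommhat] at h2
      have h3 := congrFun (congrFun h2 k) l
      simp only [hDdef, Matrix.smul_apply, Matrix.add_apply, Matrix.sub_apply,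
        Matrix.diagonal_mul, Matrix.mul_diagonal, smul_eq_mul] at h3
      push_cast
      linear_combination 2 * h3
    · intro h
      apply hinj
      rw [hRophat, hcommhat]
      ext k l
      have h3 := h k l
      simp only [hDdef, Matrix.smul_apply, Matrix.add_apply, Matrix.sub_apply,
        Matrix.diagonal_mul, Matrix.mul_diagonal, smul_eq_mul]
      push_cast at h3 ⊢
      linear_combination h3 / 2
  -- the explicit solution M in the eigenbasis
  set M : Matrix (Fin d) (Fin d) ℂ := Matrix.of (fun k l =>
    if 0 < p k + p l then
      2 * Complex.I * ((p k - p l : ℝ) : ℂ) / ((p k + p l : ℝ) : ℂ) * Hh k l else 0) with hMdef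
  have hzero : ∀ k l : Fin d, ¬ 0 < p k + p l → p k = 0 ∧ p l = 0 := by
    intro k l h
    have hk := hppos k; have hl := hppos l
    constructor <;> linarith [not_lt.mp h]
  have hMsol : ∀ k l, ((p k + p l : ℝ) : ℂ) * M k l
      = 2 * Complex.I * ((p k - p l : ℝ) : ℂ) * Hh k l := by
    intro k l
    by_cases hq : 0 < p k + p l
    · have hq' : ((p k + p l : ℝ) : ℂ) ≠ 0 := Complex.ofReal_ne_zero.mpr (ne_of_gt hq)
      simp only [hMdef, Matrix.of_apply, if_pos hq]
      exact aux_cancel _ _ _ hq'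
    · obtain ⟨hk, hl⟩ := hzero k l hq
      simp [hMdef, if_neg hq, hk, hl]
  set L : Matrix (Fin d) (Fin d) ℂ := U * M * Uᴴ with hLdef
  have hLhat : Uᴴ * L * U = M := by
    rw [hLdef]
    simp only [Matrix.mul_assoc, hUU', hUU, Matrix.mul_one, Matrix.one_mul, hcan1, hcan2]
  have hMherm : Mᴴ = M := by
    ext k l
    simp only [Matrix.conjTranspose_apply, hMdef, Matrix.of_apply]
    rw [add_comm (p l) (p k)]
    by_cases hq : 0 < p k + p l
    · rw [if_pos hq, if_pos hq]
      simp only [Complex.star_def, _root_.map_mul, map_div₀, Complex.conj_I,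
        Complex.conj_ofReal, map_ofNat, hHherm k l]
      push_cast
      ring
    · simp [if_neg hq]
  have hLmem : memX p v L := by
    constructor
    · show Lᴴ = L
      rw [hLdef, Matrix.conjTranspose_mul, Matrix.conjTranspose_mul,
        Matrix.conjTranspose_conjTranspose, hMherm, Matrix.mul_assoc]
    · intro k l hk hl
      rw [← hentry, hLhat]
      have hn : ¬ 0 < p k + p l := by rw [hk, hl]; norm_num
      simp [hMdef, if_neg hn]
  have hLsol : Rop ρ L = comm ρ H := by
    rw [heq]
    intro k l
    rw [hLhat]
    exact hMsol k l
  -- uniqueness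
  have huniq : ∀ L' : Matrix (Fin d) (Fin d) ℂ, memX p v L' → Rop ρ L' = comm ρ H → L' = L := by
    intro L' hmem hsol
    have hM' : Uᴴ * L' * U = M := by
      ext k l
      by_cases hq : 0 < p k + p l
      · have hq' : ((p k + p l : ℝ) : ℂ) ≠ 0 := Complex.ofReal_ne_zero.mpr (ne_of_gt hq)
        have h1 := (heq L').mp hsol k l
        have h2 := hMsol k l
        exact mul_left_cancel₀ hq' (by rw [h1, h2])
      · obtain ⟨hk, hl⟩ := hzero k l hq
        rw [hentry, hmem.2 k l hk hl]
        simp [hMdef, if_neg hq]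
    calc L' = U * (Uᴴ * L' * U) * Uᴴ := (hback L').symm
      _ = U * M * Uᴴ := by rw [hM']
      _ = L := rfl
  refine ⟨⟨L, ⟨hLmem, hLsol⟩, fun L' h => huniq L' h.1 h.2⟩, ?_⟩
  -- the QFI formula
  intro L' hmem hsol
  rw [huniq L' hmem hsol]
  -- step 1: wip ρ L L = Re tr(D M²)
  have htr1 : ρ * (L * L) = U * (D * (M * M)) * Uᴴ := by
    rw [hρU, hLdef]
    simp only [Matrix.mul_assoc, hUU', hUU, Matrix.mul_one, Matrix.one_mul, hcan1, hcan2]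
  have htr2 : (U * (D * (M * M)) * Uᴴ).trace = (D * (M * M)).trace := by
    rw [Matrix.trace_mul_cycle, hUU, Matrix.one_mul]
  have hwip : wip ρ L L = ((D * (M * M)).trace).re := by
    rw [wip]
    congr 1
    rw [mul_add, Matrix.trace_add, htr1, htr2]
    ring
  -- step 2: the trace as a double sum
  have htr3 : (D * (M * M)).trace = ∑ k, ∑ l, (p k : ℂ) * (M k l * M l k) := by
    calc (D * (M * M)).trace = ∑ k, (D * (M * M)) k k := rfl
      _ = ∑ k, (p k : ℂ) * (M * M) k k :=
          Finset.sum_congr rfl fun k _ => by rw [hDdef, Matrix.diagonal_mul]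
      _ = ∑ k, ∑ l, (p k : ℂ) * (M k l * M l k) :=
          Finset.sum_congr rfl fun k _ => by rw [Matrix.mul_apply, Finset.mul_sum]
  -- step 3: each term is real
  set T : Fin d → Fin d → ℝ := fun k l =>
    if 0 < p k + p l then
      p k * (4 * (p k - p l)^2 / (p k + p l)^2 * Complex.normSq (Hh k l)) else 0 with hTdef
  have hterm : ∀ k l, (p k : ℂ) * (M k l * M l k) = ((T k l : ℝ) : ℂ) := by
    intro k l
    by_cases hq : 0 < p k + p l
    · have hq2 : 0 < p l + p k := by linarith
      have hq' : ((p k + p l : ℝ) : ℂ) ≠ 0 := Complex.ofReal_ne_zero.mpr (ne_of_gt hq)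
      have hconj : Hh l k = (starRingEnd ℂ) (Hh k l) := by
        rw [← hHherm k l, Complex.conj_conj]
      have hcast1 : ((p l - p k : ℝ) : ℂ) = -((p k - p l : ℝ) : ℂ) := by push_cast; ring
      have hcast2 : ((p l + p k : ℝ) : ℂ) = ((p k + p l : ℝ) : ℂ) := by push_cast; ring
      simp only [hMdef, Matrix.of_apply, if_pos hq, if_pos hq2, hconj, hcast1, hcast2,
        hTdef]
      rw [aux_term (p k) (Complex.normSq (Hh k l)) _ _ _ hq' (Complex.mul_conj (Hh k l))]
      push_cast
      ring
    · have hq2 : ¬ 0 < p l + p k := by rw [add_comm]; exact hq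
      simp [hMdef, hTdef, if_neg hq, if_neg hq2]
  -- step 4: take real parts
  have hsum1 : wip ρ L L = ∑ k, ∑ l, T k l := by
    rw [hwip, htr3]
    have : (∑ k, ∑ l, (p k : ℂ) * (M k l * M l k))
        = (((∑ k, ∑ l, T k l : ℝ)) : ℂ) := by
      push_cast
      exact Finset.sum_congr rfl fun k _ => Finset.sum_congr rfl fun l _ => hterm k l
    rw [this, Complex.ofReal_re]
  -- step 5: symmetrize
  have hFQ : FQ p v H = 2 * ∑ k, ∑ l, (if 0 < p k + p l then
      (p k - p l)^2 / (p k + p l) * Complex.normSq (Hh k l) else 0) := by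
    rw [FQ]
    congr 1
    exact Finset.sum_congr rfl fun k _ => Finset.sum_congr rfl fun l _ => by
      rw [← hentry H k l, ← hHhdef]
  set G : Fin d → Fin d → ℝ := fun k l =>
    if 0 < p k + p l then (p k - p l)^2 / (p k + p l) * Complex.normSq (Hh k l) else 0
    with hGdef
  have hkey : ∀ k l, T k l + T l k = 4 * G k l := by
    intro k l
    by_cases hq : 0 < p k + p l
    · have hq2 : 0 < p l + p k := by linarith
      have hn : Complex.normSq (Hh l k) = Complex.normSq (Hh k l) := by
        rw [← hHherm k l, Complex.normSq_conj]
      have hq0 : p k + p l ≠ 0 := ne_of_gt hq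
      simp only [hTdef, hGdef, if_pos hq, if_pos hq2, hn, add_comm (p l) (p k)]
      field_simp
      ring
    · have hq2 : ¬ 0 < p l + p k := by rw [add_comm]; exact hq
      simp [hTdef, hGdef, if_neg hq, if_neg hq2]
  have hflip : (∑ k, ∑ l, T k l) = ∑ k, ∑ l, T l k := Finset.sum_comm
  have hdouble : 2 * (∑ k, ∑ l, T k l) = 4 * ∑ k, ∑ l, G k l := by
    calc 2 * (∑ k, ∑ l, T k l) = (∑ k, ∑ l, T k l) + (∑ k, ∑ l, T l k) := by
          rw [← hflip]; ring
      _ = ∑ k, ∑ l, (T k l + T l k) := by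
          rw [← Finset.sum_add_distrib]
          exact Finset.sum_congr rfl fun k _ => (Finset.sum_add_distrib).symm
      _ = ∑ k, ∑ l, 4 * G k l := by
          exact Finset.sum_congr rfl fun k _ => Finset.sum_congr rfl fun l _ => hkey k l
      _ = 4 * ∑ k, ∑ l, G k l := by
          rw [Finset.mul_sum]
          exact Finset.sum_congr rfl fun k _ => (Finset.mul_sum _ _ _).symm
  rw [hsum1, hFQ]
  show (∑ k, ∑ l, T k l) = 2 * ∑ k, ∑ l, G k l
  linarith

end KST
end

section
/- If the Krylov vectors R_ρ^{k}(i[ρ,H]), k = 0,…,n-1, are linearly independent, then the matrix A with entries A_{ij} = T_{i+j-1} is positive definite and the Krylov bound admits the closed form B_n = b^T A^{-1} b, where b_i = T_{i-1}. -/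
/-!
With `C = i[ρ,H]`, the identity `⟨X,Y⟩_ρ = Re tr(R_ρ(X) Y)` and the self-adjointness of `R_ρ` for
the trace pairing give `⟨R_ρ^i C, R_ρ^j C⟩_ρ = T_{i+j+1}` and `⟨L, R_ρ^j C⟩_ρ = T_j`, so `A` is the
Gram matrix of the Krylov vectors and `b` the vector of their pairings with `L`; the closed form is
then the normal equations `A c = b` for the coefficients `c` of the projection.

The form `⟨·,·⟩_ρ` is only semidefinite, but it is definite on `𝒦_n`: writing `ρ = BᴴB`, one has
`⟨X,X⟩_ρ = tr((BX)ᴴ(BX))` for Hermitian `X`, and `BX = 0` forces `ρX = Xρ = 0`, which makes `X`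
trace-orthogonal to every Krylov vector, hence to itself.
-/


open Matrix BigOperators Finset
open scoped Classical

namespace KST

variable {d : ℕ}

section Gram

variable {R M ι : Type*} [CommRing R] [AddCommGroup M] [Module R M]
  (B : LinearMap.BilinForm R M) (u : ι → M)

lemma gram_isHermitian [StarRing R] [TrivialStar R] (hB : LinearMap.IsSymm B) :
    (of fun i j => B (u i) (u j)).IsHermitian := by
  ext i j
  simpa using hB.eq (u j) (u i)

variable [Fintype ι]

lemma gram_mulVec_apply (y : ι → R) (i : ι) :
    ((of fun i j => B (u i) (u j)) *ᵥ y) i = B (u i) (∑ j, y j • u j) := by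
  simp [mulVec, dotProduct, mul_comm]

lemma dotProduct_gram_mulVec (x y : ι → R) :
    x ⬝ᵥ (of fun i j => B (u i) (u j)) *ᵥ y = B (∑ i, x i • u i) (∑ j, y j • u j) := by
  simp only [dotProduct, gram_mulVec_apply, map_sum, LinearMap.sum_apply, LinearMap.smul_apply,
    map_smul, smul_eq_mul, Finset.mul_sum]
  rw [Finset.sum_comm]
  exact Finset.sum_congr rfl fun _ _ => Finset.sum_congr rfl fun _ _ => by ring

lemma bilin_self_eq_dotProduct_gram_inv_mulVec [DecidableEq ι] (hB : LinearMap.IsSymm B)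
    (hG : IsUnit (of fun i j => B (u i) (u j)).det) {L P : M}
    (hP : P ∈ Submodule.span R (Set.range u)) (horth : ∀ j, B (L - P) (u j) = 0) :
    B P P = (fun i => B L (u i)) ⬝ᵥ (of fun i j => B (u i) (u j))⁻¹ *ᵥ (fun i => B L (u i)) := by
  obtain ⟨c, rfl⟩ := (Submodule.mem_span_range_iff_exists_fun R).mp hP
  have hGc : (of fun i j => B (u i) (u j)) *ᵥ c = fun i => B L (u i) := by
    ext i
    have h := horth i
    rw [map_sub, LinearMap.sub_apply, sub_eq_zero] at h
    rw [gram_mulVec_apply, h]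
    exact hB.eq _ _
  rw [← hGc, mulVec_mulVec, nonsing_inv_mul _ hG, one_mulVec, dotProduct_comm,
    dotProduct_gram_mulVec]

end Gram

lemma posDef_gram_of_pos {M ι : Type*} [AddCommGroup M] [Module ℝ M] [Fintype ι]
    (B : LinearMap.BilinForm ℝ M) (hB : LinearMap.IsSymm B) {u : ι → M}
    (hu : LinearIndependent ℝ u) (hpos : ∀ x ∈ Submodule.span ℝ (Set.range u), x ≠ 0 → 0 < B x x) :
    (of fun i j => B (u i) (u j)).PosDef := by
  refine posDef_iff_dotProduct_mulVec.mpr ⟨gram_isHermitian B u hB, fun x hx => ?_⟩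
  rw [star_trivial, dotProduct_gram_mulVec]
  refine hpos _ (Submodule.sum_mem _ fun i _ => Submodule.smul_mem _ _ ?_) fun h => ?_
  · exact Submodule.subset_span ⟨i, rfl⟩
  · exact hx (funext (Fintype.linearIndependent_iff.mp hu x h))

noncomputable def wipForm (ρ : Matrix (Fin d) (Fin d) ℂ) :
    LinearMap.BilinForm ℝ (Matrix (Fin d) (Fin d) ℂ) :=
  LinearMap.mk₂ ℝ (wip ρ)
    (fun X X' Y => by simp only [wip, add_mul, mul_add, trace_add, add_div, Complex.add_re]; ring)
    (fun c X Y => by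
      simp only [wip, smul_mul_assoc, mul_smul_comm, ← smul_add, trace_smul, Complex.real_smul,
        mul_div_assoc, Complex.re_ofReal_mul, smul_eq_mul])
    (fun X Y Y' => by simp only [wip, add_mul, mul_add, trace_add, add_div, Complex.add_re]; ring)
    (fun c X Y => by
      simp only [wip, smul_mul_assoc, mul_smul_comm, ← smul_add, trace_smul, Complex.real_smul,
        mul_div_assoc, Complex.re_ofReal_mul, smul_eq_mul])

@[simp]
lemma wipForm_apply (ρ X Y : Matrix (Fin d) (Fin d) ℂ) : wipForm ρ X Y = wip ρ X Y := rfl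

lemma wipForm_isSymm (ρ : Matrix (Fin d) (Fin d) ℂ) : LinearMap.IsSymm (wipForm ρ) :=
  ⟨fun X Y => by simp only [RingHom.id_apply, wipForm_apply, wip, add_comm (X * Y)]⟩

lemma trace_Rop_mul (ρ X Y : Matrix (Fin d) (Fin d) ℂ) :
    (Rop ρ X * Y).trace = (X * Rop ρ Y).trace := by
  simp only [Rop, smul_mul_assoc, mul_smul_comm, trace_smul, add_mul, mul_add, trace_add]
  rw [← Matrix.mul_assoc X ρ Y, ← Matrix.mul_assoc X Y ρ, trace_mul_cycle X Y ρ, add_comm]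

lemma trace_iterate_Rop_mul (ρ X Y : Matrix (Fin d) (Fin d) ℂ) (k : ℕ) :
    ((Rop ρ)^[k] X * Y).trace = (X * (Rop ρ)^[k] Y).trace := by
  induction k generalizing Y with
  | zero => rfl
  | succ k ih => rw [Function.iterate_succ_apply', trace_Rop_mul, ih, Function.iterate_succ_apply]

lemma wip_eq_re_trace_Rop_mul (ρ X Y : Matrix (Fin d) (Fin d) ℂ) :
    wip ρ X Y = (Rop ρ X * Y).trace.re := by
  have h : (ρ * (X * Y + Y * X)).trace = (ρ * X * Y).trace + (X * ρ * Y).trace := by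
    rw [mul_add, trace_add, ← Matrix.mul_assoc, ← Matrix.mul_assoc, trace_mul_cycle ρ Y X]
  simp only [wip, h, Rop, smul_mul_assoc, trace_smul, add_mul, trace_add, smul_eq_mul]
  ring_nf

lemma wip_iterate_iterate (ρ H : Matrix (Fin d) (Fin d) ℂ) (i j : ℕ) :
    wip ρ ((Rop ρ)^[i] (comm ρ H)) ((Rop ρ)^[j] (comm ρ H)) = Tk ρ H (i + j + 1) := by
  rw [wip_eq_re_trace_Rop_mul, ← Function.iterate_succ_apply' (Rop ρ), trace_iterate_Rop_mul,
    ← Function.iterate_add_apply, Nat.succ_add]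
  rfl

lemma wip_iterate_of_Rop_eq {ρ H L : Matrix (Fin d) (Fin d) ℂ} (hL : Rop ρ L = comm ρ H) (j : ℕ) :
    wip ρ L ((Rop ρ)^[j] (comm ρ H)) = Tk ρ H j := by
  rw [wip_eq_re_trace_Rop_mul, hL]
  rfl

lemma K_eq_span_range (ρ H : Matrix (Fin d) (Fin d) ℂ) (n : ℕ) :
    K ρ H n = Submodule.span ℝ (Set.range fun k : Fin n => (Rop ρ)^[k] (comm ρ H)) := by
  rw [K, ← Fin.range_val, ← Set.range_comp]
  rfl

lemma isHermitian_iterate_Rop_comm {ρ H : Matrix (Fin d) (Fin d) ℂ} (hρ : ρ.IsHermitian)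
    (hH : H.IsHermitian) (k : ℕ) : ((Rop ρ)^[k] (comm ρ H)).IsHermitian := by
  induction k with
  | zero =>
    simp only [Function.iterate_zero, id_eq, comm, IsHermitian, conjTranspose_smul,
      conjTranspose_sub, conjTranspose_mul, hρ.eq, hH.eq, Complex.star_def, Complex.conj_I]
    rw [neg_smul, ← smul_neg, neg_sub]
  | succ k ih =>
    rw [Function.iterate_succ_apply']
    simp only [Rop, IsHermitian, conjTranspose_smul, conjTranspose_add, conjTranspose_mul, hρ.eq,
      ih.eq, add_comm]
    norm_num

lemma isHermitian_of_mem_K {ρ H X : Matrix (Fin d) (Fin d) ℂ} {n : ℕ} (hρ : ρ.IsHermitian)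
    (hH : H.IsHermitian) (hX : X ∈ K ρ H n) : X.IsHermitian := by
  have hle : K ρ H n ≤ selfAdjoint.submodule ℝ (Matrix (Fin d) (Fin d) ℂ) := by
    refine Submodule.span_le.mpr ?_
    rintro _ ⟨k, -, rfl⟩
    exact isHermitian_iterate_Rop_comm hρ hH k
  exact hle hX

lemma trace_mul_iterate_Rop_comm_eq_zero {ρ H X : Matrix (Fin d) (Fin d) ℂ} (hρX : ρ * X = 0)
    (hXρ : X * ρ = 0) : ∀ k, (X * (Rop ρ)^[k] (comm ρ H)).trace = 0
  | 0 => by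
    rw [Function.iterate_zero_apply, comm, mul_smul_comm, mul_sub, ← Matrix.mul_assoc,
      ← Matrix.mul_assoc, hXρ, trace_smul, trace_sub, trace_mul_cycle, hρX]
    simp
  | k + 1 => by
    have hR0 : Rop ρ 0 = 0 := by simp [Rop]
    rw [← trace_iterate_Rop_mul, Function.iterate_succ_apply, Rop, hρX, hXρ, add_zero, smul_zero,
      Function.iterate_fixed hR0, Matrix.zero_mul, trace_zero]

lemma wip_self_eq_re_trace (ρ X : Matrix (Fin d) (Fin d) ℂ) :
    wip ρ X X = (ρ * (X * X)).trace.re := by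
  rw [wip, mul_add, trace_add, add_self_div_two]

open scoped ComplexOrder in
lemma wip_self_pos_of_mem_K {ρ B H X : Matrix (Fin d) (Fin d) ℂ} {n : ℕ} (hρ : ρ = Bᴴ * B)
    (hH : H.IsHermitian) (hX : X ∈ K ρ H n) (hX0 : X ≠ 0) : 0 < wip ρ X X := by
  have hXh := isHermitian_of_mem_K (hρ ▸ isHermitian_conjTranspose_mul_self B) hH hX
  have hBX : B * X ≠ 0 := by
    intro h
    have hρX : ρ * X = 0 := by rw [hρ, Matrix.mul_assoc, h, Matrix.mul_zero]
    have hXρ : X * ρ = 0 := by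
      rw [hρ, ← Matrix.mul_assoc, ← hXh.eq, ← conjTranspose_mul, h, conjTranspose_zero,
        Matrix.zero_mul]
    obtain ⟨c, hc⟩ := (Submodule.mem_span_range_iff_exists_fun ℝ).mp (K_eq_span_range ρ H n ▸ hX)
    have htr : (Xᴴ * X).trace = 0 := by
      nth_rewrite 2 [← hc]
      simp [Matrix.mul_sum, trace_sum, hXh.eq, trace_mul_iterate_Rop_comm_eq_zero hρX hXρ]
    exact hX0 (trace_conjTranspose_mul_self_eq_zero_iff.mp htr)
  have hpos : 0 < ((B * X)ᴴ * (B * X)).trace :=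
    lt_of_le_of_ne (posSemidef_conjTranspose_mul_self _).trace_nonneg
      (Ne.symm (mt trace_conjTranspose_mul_self_eq_zero_iff.mp hBX))
  rw [conjTranspose_mul, hXh.eq, Matrix.mul_assoc, ← Matrix.mul_assoc Bᴴ, ← hρ, trace_mul_comm,
    Matrix.mul_assoc] at hpos
  rw [wip_self_eq_re_trace]
  exact (Complex.pos_iff.mp hpos).1

open scoped ComplexOrder MatrixOrder in
lemma _root_.Matrix.PosSemidef.exists_eq_conjTranspose_mul_self {m : Type*} [Fintype m]
    [DecidableEq m] {ρ : Matrix m m ℂ} (hρ : ρ.PosSemidef) : ∃ B : Matrix m m ℂ, ρ = Bᴴ * B :=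
  CStarAlgebra.nonneg_iff_eq_star_mul_self.mp hρ.nonneg

open scoped ComplexOrder in
lemma exists_eq_conjTranspose_mul_self_of_eq_sum {m ι : Type*} [Fintype m] [DecidableEq m]
    [Fintype ι] {ρ : Matrix m m ℂ} {p : ι → ℝ} {v : ι → m → ℂ}
    (hρ : ρ = ∑ k, (p k : ℂ) • vecMulVec (v k) (star (v k))) (hp : ∀ k, 0 ≤ p k) :
    ∃ B : Matrix m m ℂ, ρ = Bᴴ * B := by
  refine PosSemidef.exists_eq_conjTranspose_mul_self ?_
  rw [hρ]
  exact posSemidef_sum _ fun k _ =>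
    (posSemidef_vecMulVec_self_star (v k)).smul (Complex.zero_le_real.mpr (hp k))

theorem stmt8_general {d : ℕ} (ρ : Matrix (Fin d) (Fin d) ℂ) (p : Fin d → ℝ) (v : Fin d → (Fin d → ℂ))
    (hρ : ρ = ∑ k, (p k : ℂ) • vecMulVec (v k) (star (v k)))
    (hppos : ∀ k, 0 ≤ p k) (H : Matrix (Fin d) (Fin d) ℂ) (hH : H.IsHermitian)
    (L : Matrix (Fin d) (Fin d) ℂ) (hL : Rop ρ L = comm ρ H)
    (n : ℕ)
    (hind : LinearIndependent ℝ (fun k : Fin n => (Rop ρ)^[(k : ℕ)] (comm ρ H))) :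
    (Matrix.of fun i j : Fin n => Tk ρ H ((i : ℕ) + (j : ℕ) + 1)).PosDef ∧
    (∀ P, IsProj ρ H n L P →
      wip ρ P P =
        (fun i : Fin n => Tk ρ H (i : ℕ)) ⬝ᵥ
          ((Matrix.of fun i j : Fin n => Tk ρ H ((i : ℕ) + (j : ℕ) + 1))⁻¹).mulVec
            (fun i : Fin n => Tk ρ H (i : ℕ))) := by
  obtain ⟨B, hB⟩ := exists_eq_conjTranspose_mul_self_of_eq_sum hρ hppos
  set u : Fin n → Matrix (Fin d) (Fin d) ℂ := fun k => (Rop ρ)^[k] (comm ρ H)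
  have hK : K ρ H n = Submodule.span ℝ (Set.range u) := K_eq_span_range ρ H n
  have hG : (of fun i j : Fin n => Tk ρ H (i + j + 1)) = of fun i j => wipForm ρ (u i) (u j) := by
    ext i j
    exact (wip_iterate_iterate ρ H i j).symm
  have hb : (fun i : Fin n => Tk ρ H i) = fun i => wipForm ρ L (u i) :=
    funext fun i => (wip_iterate_of_Rop_eq hL i).symm
  have hA : (of fun i j => wipForm ρ (u i) (u j)).PosDef :=
    posDef_gram_of_pos (wipForm ρ) (wipForm_isSymm ρ) hind fun X hX hX0 =>
      wip_self_pos_of_mem_K hB hH (hK ▸ hX) hX0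
  rw [hG, hb]
  refine ⟨hA, fun P ⟨hPK, hPorth⟩ => ?_⟩
  exact bilin_self_eq_dotProduct_gram_inv_mulVec (wipForm ρ) u (wipForm_isSymm ρ)
    ((isUnit_iff_isUnit_det _).mp hA.isUnit) (hK ▸ hPK)
    fun j => hPorth _ (hK ▸ Submodule.subset_span ⟨j, rfl⟩)

/-- If the Krylov vectors are linearly independent, the Gram matrix A with entries
T_{i+j-1} is positive definite and the Krylov bound has closed form B_n = bᵀA⁻¹b. -/
theorem stmt8 {d : ℕ} (ρ : Matrix (Fin d) (Fin d) ℂ) (p : Fin d → ℝ) (v : Fin d → (Fin d → ℂ))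
    (hρ : ρ = ∑ k, (p k : ℂ) • vecMulVec (v k) (star (v k)))
    (horth : ∀ k l, star (v k) ⬝ᵥ v l = (if k = l then 1 else 0))
    (hppos : ∀ k, 0 ≤ p k) (hptr : ∑ k, p k = 1) (H : Matrix (Fin d) (Fin d) ℂ) (hH : H.IsHermitian)
    (L : Matrix (Fin d) (Fin d) ℂ) (hLX : memX p v L) (hL : Rop ρ L = comm ρ H)
    (n : ℕ)
    (hind : LinearIndependent ℝ (fun k : Fin n => (Rop ρ)^[(k : ℕ)] (comm ρ H))) :
    (Matrix.of fun i j : Fin n => Tk ρ H ((i : ℕ) + (j : ℕ) + 1)).PosDef ∧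
    (∀ P, IsProj ρ H n L P →
      wip ρ P P =
        (fun i : Fin n => Tk ρ H (i : ℕ)) ⬝ᵥ
          ((Matrix.of fun i j : Fin n => Tk ρ H ((i : ℕ) + (j : ℕ) + 1))⁻¹).mulVec
            (fun i : Fin n => Tk ρ H (i : ℕ))) :=
  stmt8_general ρ p v hρ hppos H hH L hL n hind

end KST
end

section
/- The relative gap between the n-th Krylov bound and the quantum Fisher information decays exponentially: (F_Q − B_n)/F_Q ≤ 4[(√κ − 1)/(√κ + 1)]^{2n}, where κ is the ratio λ_max/λ_min of the largest to smallest nonzero eigenvalues of the superoperator R_ρ restricted to 𝒳. -/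
open Matrix BigOperators Finset
open scoped Classical

namespace KST

variable {d : ℕ}

/-! ### Auxiliary lemmas -/

open Polynomial Polynomial.Chebyshev in
theorem T_complex_cosh (z : ℂ) (n : ℤ) : (T ℂ n).eval (Complex.cosh z) = Complex.cosh (n * z) := by
  have h := Polynomial.Chebyshev.T_complex_cos (z * Complex.I) n
  rw [Complex.cos_mul_I] at h
  rw [h, show (n : ℂ) * (z * Complex.I) = ((n : ℂ) * z) * Complex.I by ring, Complex.cos_mul_I]

open Polynomial Polynomial.Chebyshev in
theorem T_real_cosh (t : ℝ) (n : ℤ) : (T ℝ n).eval (Real.cosh t) = Real.cosh (n * t) := by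
  have := T_complex_cosh (t : ℂ) n
  exact_mod_cast this

open Polynomial Polynomial.Chebyshev in
theorem T_natDegree_le : ∀ n : ℕ, (T ℝ (n : ℤ)).natDegree ≤ n := by
  intro n
  induction n using Nat.strong_induction_on with
  | _ n ih =>
    match n with
    | 0 => simp [T_zero]
    | 1 => simp [T_one]
    | (m+2) =>
      have h1 := ih (m+1) (by omega)
      have h0 := ih m (by omega)
      rw [show ((m+2 : ℕ) : ℤ) = (m : ℤ) + 2 by push_cast; ring, T_add_two]
      refine le_trans (natDegree_sub_le _ _) ?_
      have : (2 * X * T ℝ ((m:ℤ)+1)).natDegree ≤ m + 2 := by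
        refine le_trans (natDegree_mul_le) ?_
        have h2 : (2 * X : ℝ[X]).natDegree ≤ 1 := by
          refine le_trans (natDegree_mul_le) ?_
          simp
        have h1' : (T ℝ ((m:ℤ)+1)).natDegree ≤ m + 1 := by exact_mod_cast h1
        omega
      simp only [max_le_iff]
      exact ⟨this, le_trans h0 (by omega)⟩

open Polynomial Polynomial.Chebyshev in
theorem cheb_exists (lmin lmax : ℝ) (h0 : 0 < lmin) (hle : lmin ≤ lmax) (n : ℕ) :
    ∃ g : Polynomial ℝ, (g = 0 ∨ g.natDegree < n) ∧ ∀ x, lmin ≤ x → x ≤ lmax →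
      |1 - x * g.eval x| ≤
        2 * ((Real.sqrt (lmax/lmin) - 1)/(Real.sqrt (lmax/lmin) + 1))^n := by
  set σ : ℝ := (Real.sqrt (lmax/lmin) - 1)/(Real.sqrt (lmax/lmin) + 1) with hσdef
  rcases Nat.eq_zero_or_pos n with hn | hn
  · refine ⟨0, Or.inl rfl, fun x _ _ => ?_⟩
    simp [hn]
  rcases eq_or_lt_of_le hle with heq | hlt
  · have hσ0 : σ = 0 := by
      rw [hσdef, ← heq, div_self h0.ne', Real.sqrt_one]
      simp
    refine ⟨Polynomial.C lmin⁻¹, Or.inr (by simpa using hn), fun x hx1 hx2 => ?_⟩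
    have hx : x = lmin := le_antisymm (heq ▸ hx2) hx1
    rw [hx, hσ0]
    simp [mul_inv_cancel₀ h0.ne', zero_pow (by omega : n ≠ 0)]
  · set κ : ℝ := lmax / lmin with hκdef
    have hκ1 : 1 < κ := (one_lt_div h0).mpr hlt
    set s : ℝ := Real.sqrt κ with hsdef
    have hs1 : 1 < s := by
      rw [hsdef, show (1:ℝ) = Real.sqrt 1 by simp]
      exact Real.sqrt_lt_sqrt (by norm_num) hκ1
    have hs2 : s ^ 2 = κ := Real.sq_sqrt (by positivity)
    have hσpos : 0 < σ := by
      rw [hσdef]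
      have : 0 < s - 1 := by linarith
      positivity
    have hs1' : (0:ℝ) < s - 1 := by linarith
    set t : ℝ := Real.log ((s+1)/(s-1)) with htdef
    have hexp : Real.exp t = (s+1)/(s-1) := Real.exp_log (by positivity)
    have hexpinv : Real.exp (-t) = (s-1)/(s+1) := by
      rw [Real.exp_neg, hexp]
      rw [inv_div]
    have hσinv : σ⁻¹ = (s+1)/(s-1) := by
      rw [hσdef, inv_div]
    set y0 : ℝ := (lmax + lmin)/(lmax - lmin) with hy0def
    have hml : (0:ℝ) < lmax - lmin := by linarith
    have hy0cosh : y0 = Real.cosh t := by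
      rw [Real.cosh_eq, hexp, hexpinv, hy0def]
      have h1 : s^2 - 1 > 0 := by nlinarith
      have hκl : κ * lmin = lmax := by
        rw [hκdef]; field_simp
      field_simp
      nlinarith [hs2, hκl]
    set t0 : ℝ := (T ℝ (n:ℤ)).eval y0 with ht0def
    have ht0 : t0 = Real.cosh (n * t) := by
      rw [ht0def, hy0cosh, T_real_cosh]
      norm_num
    have hexpnt : Real.exp ((n:ℝ) * t) = σ⁻¹ ^ n := by
      rw [Real.exp_nat_mul, hexp, hσinv]
    have ht0ge : σ⁻¹ ^ n / 2 ≤ t0 := by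
      rw [ht0, Real.cosh_eq, ← hexpnt]
      have := Real.exp_pos (-((n:ℝ)*t))
      linarith
    have hσinvpos : 0 < σ⁻¹ ^ n := by positivity
    have ht0pos : 0 < t0 := by linarith
    have ht0inv : t0⁻¹ ≤ 2 * σ ^ n := by
      have h1 : t0⁻¹ ≤ (σ⁻¹ ^ n / 2)⁻¹ := by
        apply inv_anti₀ (by positivity) ht0ge
      refine le_trans h1 (le_of_eq ?_)
      rw [inv_div, div_eq_mul_inv, ← inv_pow, inv_inv]
    set q : Polynomial ℝ :=
      (T ℝ (n:ℤ)).comp (Polynomial.C y0 - Polynomial.C (2/(lmax-lmin)) * Polynomial.X) with hqdef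
    set P : Polynomial ℝ := Polynomial.C t0⁻¹ * q with hPdef
    have hPeval : ∀ x : ℝ, P.eval x = t0⁻¹ * (T ℝ (n:ℤ)).eval (y0 - 2/(lmax-lmin) * x) := by
      intro x
      simp [hPdef, hqdef, Polynomial.eval_comp]
    have hPdeg : P.natDegree ≤ n := by
      refine le_trans (Polynomial.natDegree_mul_le) ?_
      simp only [Polynomial.natDegree_C, zero_add]
      refine le_trans (Polynomial.natDegree_comp_le) ?_
      have h1 : (Polynomial.C y0 - Polynomial.C (2/(lmax-lmin)) * Polynomial.X :
          Polynomial ℝ).natDegree ≤ 1 := by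
        refine le_trans (Polynomial.natDegree_sub_le _ _) ?_
        simp only [Polynomial.natDegree_C, max_le_iff]
        refine ⟨by omega, ?_⟩
        refine le_trans (Polynomial.natDegree_mul_le) ?_
        simp
      calc (T ℝ (n:ℤ)).natDegree * (Polynomial.C y0 - Polynomial.C (2/(lmax-lmin)) * Polynomial.X :
            Polynomial ℝ).natDegree
          ≤ n * 1 := Nat.mul_le_mul (T_natDegree_le n) h1
        _ = n := by omega
    have hP0 : P.eval 0 = 1 := by
      rw [hPeval 0]
      simp only [mul_zero, sub_zero]
      rw [← ht0def, inv_mul_cancel₀ ht0pos.ne']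
    have hPbound : ∀ x, lmin ≤ x → x ≤ lmax → |P.eval x| ≤ 2 * σ ^ n := by
      intro x hx1 hx2
      rw [hPeval x]
      set y : ℝ := y0 - 2/(lmax-lmin) * x with hydef
      have hyeq : y = (lmax + lmin - 2*x)/(lmax-lmin) := by
        rw [hydef, hy0def]
        field_simp
      have hy1 : -1 ≤ y := by
        rw [hyeq, le_div_iff₀ hml]
        linarith
      have hy2 : y ≤ 1 := by
        rw [hyeq, div_le_iff₀ hml]
        linarith
      have hcos : Real.cos (Real.arccos y) = y := Real.cos_arccos hy1 hy2
      have hT : |(T ℝ (n:ℤ)).eval y| ≤ 1 := by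
        rw [← hcos, Polynomial.Chebyshev.T_real_cos]
        exact Real.abs_cos_le_one _
      rw [abs_mul, abs_of_pos (by positivity : (0:ℝ) < t0⁻¹)]
      calc t0⁻¹ * |(T ℝ (n:ℤ)).eval y| ≤ t0⁻¹ * 1 :=
            mul_le_mul_of_nonneg_left hT (by positivity)
        _ = t0⁻¹ := mul_one _
        _ ≤ 2 * σ ^ n := ht0inv
    refine ⟨-P.divX, Or.inr ?_, fun x hx1 hx2 => ?_⟩
    · have h1 := Polynomial.natDegree_divX_eq_natDegree_tsub_one (p := P)
      have h2 : (-P.divX).natDegree = P.divX.natDegree := Polynomial.natDegree_neg _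
      omega
    · have hdecomp := Polynomial.X_mul_divX_add P
      have hc0 : P.coeff 0 = 1 := by
        rw [← Polynomial.coeff_zero_eq_eval_zero] at hP0
        exact hP0
      have heq : 1 - x * (-P.divX).eval x = P.eval x := by
        conv_rhs => rw [← hdecomp]
        simp [hc0]
        ring
      rw [heq]
      exact hPbound x hx1 hx2

/-! ### Coordinate machinery -/

noncomputable def Cmat (v : Fin d → (Fin d → ℂ)) : Matrix (Fin d) (Fin d) ℂ :=
  Matrix.of fun i l => v l i

noncomputable def coord (v : Fin d → (Fin d → ℂ)) (X : Matrix (Fin d) (Fin d) ℂ) :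
    Matrix (Fin d) (Fin d) ℂ :=
  (Cmat v)ᴴ * X * (Cmat v)

section Orth

variable {ρ : Matrix (Fin d) (Fin d) ℂ} {p : Fin d → ℝ} {v : Fin d → (Fin d → ℂ)}

lemma coord_entry' (v : Fin d → (Fin d → ℂ)) (X : Matrix (Fin d) (Fin d) ℂ) (k l : Fin d) :
    coord v X k l = star (v k) ⬝ᵥ X.mulVec (v l) := by
  simp only [coord, Cmat, Matrix.mul_apply, Matrix.conjTranspose_apply, Matrix.of_apply,
    Matrix.mulVec, dotProduct, Pi.star_apply, Finset.sum_mul, Finset.mul_sum]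
  rw [Finset.sum_comm]
  apply Finset.sum_congr rfl
  intro i _
  apply Finset.sum_congr rfl
  intro j _
  ring

lemma rho_mulVec (hρ : ρ = ∑ k, (p k : ℂ) • vecMulVec (v k) (star (v k)))
    (horth : ∀ k l, star (v k) ⬝ᵥ v l = (if k = l then 1 else 0)) (l : Fin d) :
    ρ.mulVec (v l) = (p l : ℂ) • v l := by
  funext i
  rw [hρ]
  simp only [Matrix.mulVec, dotProduct, Matrix.sum_apply, Matrix.smul_apply, vecMulVec_apply,
    smul_eq_mul, Finset.sum_mul]
  rw [Finset.sum_comm]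
  have h1 : ∀ a : Fin d, (∑ j, (p a:ℂ) * (v a i * star (v a) j) * v l j)
      = (p a : ℂ) * v a i * (if a = l then 1 else 0) := by
    intro a
    rw [← horth a l]
    simp only [dotProduct, Pi.star_apply, Finset.mul_sum]
    apply Finset.sum_congr rfl
    intro j _
    ring
  rw [Finset.sum_congr rfl (fun a _ => h1 a)]
  simp [Pi.smul_apply, smul_eq_mul, mul_ite, Finset.sum_ite_eq']

lemma coord_rho (hρ : ρ = ∑ k, (p k : ℂ) • vecMulVec (v k) (star (v k)))
    (horth : ∀ k l, star (v k) ⬝ᵥ v l = (if k = l then 1 else 0)) :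
    coord v ρ = Matrix.diagonal (fun k => (p k : ℂ)) := by
  ext k l
  rw [coord_entry', rho_mulVec hρ horth]
  rw [dotProduct_smul, horth k l]
  simp [Matrix.diagonal, smul_eq_mul]
  by_cases h : k = l <;> simp [h]

lemma Cmat_unitary (horth : ∀ k l, star (v k) ⬝ᵥ v l = (if k = l then 1 else 0)) :
    (Cmat v)ᴴ * (Cmat v) = 1 := by
  ext k l
  simp only [Matrix.mul_apply, Cmat, Matrix.conjTranspose_apply, Matrix.of_apply]
  have := horth k l
  simp only [dotProduct, Pi.star_apply] at this
  rw [this, Matrix.one_apply]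

lemma Cmat_unitary' (horth : ∀ k l, star (v k) ⬝ᵥ v l = (if k = l then 1 else 0)) :
    (Cmat v) * (Cmat v)ᴴ = 1 :=
  mul_eq_one_comm.mp (Cmat_unitary horth)

lemma coord_mul (horth : ∀ k l, star (v k) ⬝ᵥ v l = (if k = l then 1 else 0))
    (X Y : Matrix (Fin d) (Fin d) ℂ) :
    coord v (X * Y) = coord v X * coord v Y := by
  simp only [coord]
  calc (Cmat v)ᴴ * (X * Y) * Cmat v
      = (Cmat v)ᴴ * X * ((Cmat v) * (Cmat v)ᴴ) * Y * Cmat v := by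
        rw [Cmat_unitary' horth]; noncomm_ring
    _ = (Cmat v)ᴴ * X * Cmat v * ((Cmat v)ᴴ * Y * Cmat v) := by noncomm_ring

lemma coord_add (X Y : Matrix (Fin d) (Fin d) ℂ) :
    coord v (X + Y) = coord v X + coord v Y := by
  simp [coord, Matrix.mul_add, Matrix.add_mul]

lemma coord_sub (X Y : Matrix (Fin d) (Fin d) ℂ) :
    coord v (X - Y) = coord v X - coord v Y := by
  simp [coord, Matrix.mul_sub, Matrix.sub_mul]

lemma coord_smul (r : ℝ) (X : Matrix (Fin d) (Fin d) ℂ) :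
    coord v (r • X) = r • coord v X := by
  simp [coord, Matrix.mul_smul, Matrix.smul_mul]

lemma coord_csmul (r : ℂ) (X : Matrix (Fin d) (Fin d) ℂ) :
    coord v (r • X) = r • coord v X := by
  simp [coord, Matrix.mul_smul, Matrix.smul_mul]

lemma coord_sum {ι : Type*} (s : Finset ι) (f : ι → Matrix (Fin d) (Fin d) ℂ) :
    coord v (∑ j ∈ s, f j) = ∑ j ∈ s, coord v (f j) := by
  simp [coord, Matrix.mul_sum, Matrix.sum_mul]

lemma trace_coord (horth : ∀ k l, star (v k) ⬝ᵥ v l = (if k = l then 1 else 0))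
    (X : Matrix (Fin d) (Fin d) ℂ) :
    (coord v X).trace = X.trace := by
  simp only [coord]
  rw [Matrix.trace_mul_cycle]
  rw [Cmat_unitary' horth, Matrix.one_mul]

lemma coord_conjTranspose (X : Matrix (Fin d) (Fin d) ℂ) :
    coord v Xᴴ = (coord v X)ᴴ := by
  simp [coord, Matrix.conjTranspose_mul, Matrix.mul_assoc]

lemma coord_Rop (hρ : ρ = ∑ k, (p k : ℂ) • vecMulVec (v k) (star (v k)))
    (horth : ∀ k l, star (v k) ⬝ᵥ v l = (if k = l then 1 else 0))
    (X : Matrix (Fin d) (Fin d) ℂ) (k l : Fin d) :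
    coord v (Rop ρ X) k l = (((p k + p l)/2 : ℝ) : ℂ) * coord v X k l := by
  rw [Rop, coord_csmul, coord_add, coord_mul horth, coord_mul horth, coord_rho hρ horth]
  simp only [Matrix.smul_apply, Matrix.add_apply, Matrix.diagonal_mul, Matrix.mul_diagonal,
    smul_eq_mul]
  push_cast
  ring

lemma coord_Rop_iter (hρ : ρ = ∑ k, (p k : ℂ) • vecMulVec (v k) (star (v k)))
    (horth : ∀ k l, star (v k) ⬝ᵥ v l = (if k = l then 1 else 0))
    (X : Matrix (Fin d) (Fin d) ℂ) (m : ℕ) (k l : Fin d) :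
    coord v ((Rop ρ)^[m] X) k l = ((((p k + p l)/2 : ℝ))^m : ℂ) * coord v X k l := by
  induction m with
  | zero => simp
  | succ m ih =>
    rw [Function.iterate_succ_apply', coord_Rop hρ horth, ih]
    push_cast
    ring

lemma trace_rho_mul (hρ : ρ = ∑ k, (p k : ℂ) • vecMulVec (v k) (star (v k)))
    (horth : ∀ k l, star (v k) ⬝ᵥ v l = (if k = l then 1 else 0))
    (X Y : Matrix (Fin d) (Fin d) ℂ) :
    (ρ * (X * Y + Y * X)).trace
      = ∑ k, ∑ l, (((p k : ℂ) + p l) * (coord v X k l * coord v Y l k)) := by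
  rw [← trace_coord horth, coord_mul horth, coord_add, coord_mul horth, coord_mul horth,
    coord_rho hρ horth]
  have hdt : ∀ (M : Matrix (Fin d) (Fin d) ℂ),
      (Matrix.diagonal (fun k => (p k : ℂ)) * M).trace = ∑ k, (p k : ℂ) * M k k := by
    intro M
    simp [Matrix.trace, Matrix.diag, Matrix.diagonal_mul]
  rw [hdt]
  simp only [Matrix.add_apply, Matrix.mul_apply, mul_add, Finset.mul_sum]
  set A := coord v X with hA
  set B := coord v Y with hB
  have hswap : ∑ k, ∑ l, (p k : ℂ) * (B k l * A l k) = ∑ k, ∑ l, (p l : ℂ) * (B l k * A k l) :=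
    Finset.sum_comm
  calc ∑ k, (∑ l, (p k : ℂ) * (A k l * B l k) + ∑ l, (p k : ℂ) * (B k l * A l k))
      = ∑ k, ∑ l, (p k : ℂ) * (A k l * B l k) + ∑ k, ∑ l, (p k : ℂ) * (B k l * A l k) := by
        rw [Finset.sum_add_distrib]
    _ = ∑ k, ∑ l, (p k : ℂ) * (A k l * B l k) + ∑ k, ∑ l, (p l : ℂ) * (B l k * A k l) := by
        rw [hswap]
    _ = ∑ k, ∑ l, (((p k : ℂ) + p l) * (A k l * B l k)) := by
        rw [← Finset.sum_add_distrib]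
        apply Finset.sum_congr rfl; intro k _
        rw [← Finset.sum_add_distrib]
        apply Finset.sum_congr rfl; intro l _
        ring

lemma wip_coord (hρ : ρ = ∑ k, (p k : ℂ) • vecMulVec (v k) (star (v k)))
    (horth : ∀ k l, star (v k) ⬝ᵥ v l = (if k = l then 1 else 0))
    (X Y : Matrix (Fin d) (Fin d) ℂ) :
    wip ρ X Y = ∑ k, ∑ l, ((p k + p l)/2) * (coord v X k l * coord v Y l k).re := by
  rw [wip, trace_rho_mul hρ horth]
  have h2 : ∀ w : ℂ, (w / 2).re = (1/2 : ℝ) * w.re := by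
    intro w
    rw [show w / 2 = ((1/2 : ℝ) : ℂ) * w by push_cast; ring, Complex.re_ofReal_mul]
  rw [h2, Complex.re_sum, Finset.mul_sum]
  apply Finset.sum_congr rfl; intro k _
  rw [Complex.re_sum, Finset.mul_sum]
  apply Finset.sum_congr rfl; intro l _
  rw [show ((p k : ℂ) + p l) = ((p k + p l : ℝ) : ℂ) by push_cast; ring, Complex.re_ofReal_mul]
  ring

lemma rho_eq_unitary (hρ : ρ = ∑ k, (p k : ℂ) • vecMulVec (v k) (star (v k)))
    (horth : ∀ k l, star (v k) ⬝ᵥ v l = (if k = l then 1 else 0)) :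
    ρ = Cmat v * Matrix.diagonal (fun k => (p k : ℂ)) * (Cmat v)ᴴ := by
  have h := coord_rho hρ horth
  calc ρ = (Cmat v * (Cmat v)ᴴ) * ρ * (Cmat v * (Cmat v)ᴴ) := by
        rw [Cmat_unitary' horth]; simp
    _ = Cmat v * (coord v ρ) * (Cmat v)ᴴ := by rw [coord]; noncomm_ring
    _ = _ := by rw [h]

lemma rho_herm (hρ : ρ = ∑ k, (p k : ℂ) • vecMulVec (v k) (star (v k)))
    (horth : ∀ k l, star (v k) ⬝ᵥ v l = (if k = l then 1 else 0)) :
    ρ.IsHermitian := by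
  rw [rho_eq_unitary hρ horth]
  show _ᴴ = _
  rw [Matrix.conjTranspose_mul, Matrix.conjTranspose_mul, Matrix.conjTranspose_conjTranspose,
    Matrix.diagonal_conjTranspose]
  have : star (fun k => (p k : ℂ)) = fun k => (p k : ℂ) := by
    funext k
    simp [Complex.conj_ofReal]
  rw [this, Matrix.mul_assoc]

lemma Rop_herm (hρh : ρ.IsHermitian) {X : Matrix (Fin d) (Fin d) ℂ} (hX : X.IsHermitian) :
    (Rop ρ X).IsHermitian := by
  have h1 : ρᴴ = ρ := hρh
  have h2 : Xᴴ = X := hX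
  show _ᴴ = _
  rw [Rop, Matrix.conjTranspose_smul, Matrix.conjTranspose_add, Matrix.conjTranspose_mul,
    Matrix.conjTranspose_mul, h1, h2]
  rw [show star (1/2 : ℂ) = (1/2 : ℂ) by simp]
  rw [add_comm]

lemma Rop_iter_herm (hρh : ρ.IsHermitian) {X : Matrix (Fin d) (Fin d) ℂ} (hX : X.IsHermitian)
    (m : ℕ) : ((Rop ρ)^[m] X).IsHermitian := by
  induction m with
  | zero => exact hX
  | succ m ih => rw [Function.iterate_succ_apply']; exact Rop_herm hρh ih

lemma comm_herm (hρh : ρ.IsHermitian) {H : Matrix (Fin d) (Fin d) ℂ} (hH : H.IsHermitian) :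
    (comm ρ H).IsHermitian := by
  have h1 : ρᴴ = ρ := hρh
  have h2 : Hᴴ = H := hH
  show _ᴴ = _
  rw [comm, Matrix.conjTranspose_smul, Matrix.conjTranspose_sub, Matrix.conjTranspose_mul,
    Matrix.conjTranspose_mul, h1, h2, Complex.star_def, Complex.conj_I, neg_smul, smul_sub,
    smul_sub, neg_sub]

lemma K_herm (hρh : ρ.IsHermitian) {H : Matrix (Fin d) (Fin d) ℂ} (hH : H.IsHermitian)
    {n : ℕ} {Y : Matrix (Fin d) (Fin d) ℂ} (hY : Y ∈ K ρ H n) : Y.IsHermitian := by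
  refine Submodule.span_induction ?_ ?_ ?_ ?_ hY
  · rintro x ⟨m, -, rfl⟩
    exact Rop_iter_herm hρh (comm_herm hρh hH) m
  · exact Matrix.isHermitian_zero
  · intro x y _ _ hx hy
    exact hx.add hy
  · intro a x _ hx
    show _ᴴ = _
    rw [Matrix.conjTranspose_smul, star_trivial, hx]

lemma herm_coord {X : Matrix (Fin d) (Fin d) ℂ} (hX : X.IsHermitian) (k l : Fin d) :
    coord v X l k = (starRingEnd ℂ) (coord v X k l) := by
  have h : coord v X = (coord v X)ᴴ := by
    conv_lhs => rw [← hX.eq, coord_conjTranspose]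
  conv_lhs => rw [h]
  rfl

lemma wip_self_coord (hρ : ρ = ∑ k, (p k : ℂ) • vecMulVec (v k) (star (v k)))
    (horth : ∀ k l, star (v k) ⬝ᵥ v l = (if k = l then 1 else 0))
    {X : Matrix (Fin d) (Fin d) ℂ} (hX : X.IsHermitian) :
    wip ρ X X = ∑ k, ∑ l, ((p k + p l)/2) * Complex.normSq (coord v X k l) := by
  rw [wip_coord hρ horth]
  apply Finset.sum_congr rfl; intro k _
  apply Finset.sum_congr rfl; intro l _
  rw [herm_coord hX k l, Complex.mul_conj, Complex.ofReal_re]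

lemma wip_self_nonneg (hρ : ρ = ∑ k, (p k : ℂ) • vecMulVec (v k) (star (v k)))
    (horth : ∀ k l, star (v k) ⬝ᵥ v l = (if k = l then 1 else 0))
    (hppos : ∀ k, 0 ≤ p k)
    {X : Matrix (Fin d) (Fin d) ℂ} (hX : X.IsHermitian) :
    0 ≤ wip ρ X X := by
  rw [wip_self_coord hρ horth hX]
  apply Finset.sum_nonneg; intro k _
  apply Finset.sum_nonneg; intro l _
  have := hppos k; have := hppos l
  have := Complex.normSq_nonneg (coord v X k l)
  positivity

lemma wip_comm (X Y : Matrix (Fin d) (Fin d) ℂ) : wip ρ X Y = wip ρ Y X := by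
  rw [wip, wip, add_comm]

lemma wip_sub_left (hρ : ρ = ∑ k, (p k : ℂ) • vecMulVec (v k) (star (v k)))
    (horth : ∀ k l, star (v k) ⬝ᵥ v l = (if k = l then 1 else 0))
    (X Y Z : Matrix (Fin d) (Fin d) ℂ) :
    wip ρ (X - Y) Z = wip ρ X Z - wip ρ Y Z := by
  simp only [wip_coord hρ horth, coord_sub, Matrix.sub_apply, sub_mul, Complex.sub_re, mul_sub,
    Finset.sum_sub_distrib]

lemma wip_add_left (hρ : ρ = ∑ k, (p k : ℂ) • vecMulVec (v k) (star (v k)))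
    (horth : ∀ k l, star (v k) ⬝ᵥ v l = (if k = l then 1 else 0))
    (X Y Z : Matrix (Fin d) (Fin d) ℂ) :
    wip ρ (X + Y) Z = wip ρ X Z + wip ρ Y Z := by
  simp only [wip_coord hρ horth, coord_add, Matrix.add_apply, add_mul, Complex.add_re, mul_add,
    Finset.sum_add_distrib]

lemma vecMulVec_mulVec' (u w x : Fin d → ℂ) :
    (vecMulVec u w).mulVec x = (w ⬝ᵥ x) • u := by
  funext i
  simp only [Matrix.mulVec, dotProduct, vecMulVec_apply, Pi.smul_apply, smul_eq_mul,
    Finset.sum_mul, Finset.mul_sum]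
  apply Finset.sum_congr rfl
  intro j _
  ring

lemma mu_bounds (hρ : ρ = ∑ k, (p k : ℂ) • vecMulVec (v k) (star (v k)))
    (horth : ∀ k l, star (v k) ⬝ᵥ v l = (if k = l then 1 else 0))
    (hppos : ∀ k, 0 ≤ p k) {lmin lmax : ℝ}
    (hbounds : ∀ X, memX p v X →
      lmin * wip ρ X X ≤ wip ρ (Rop ρ X) X ∧ wip ρ (Rop ρ X) X ≤ lmax * wip ρ X X)
    (k l : Fin d) (hμ : 0 < (p k + p l)/2) :
    lmin ≤ (p k + p l)/2 ∧ (p k + p l)/2 ≤ lmax := by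
  set μ0 : ℝ := (p k + p l)/2 with hμ0
  set Xt : Matrix (Fin d) (Fin d) ℂ :=
    vecMulVec (v k) (star (v l)) + vecMulVec (v l) (star (v k)) with hXt
  have hcoordXt : ∀ a b, coord v Xt a b =
      (if a = k ∧ b = l then 1 else 0) + (if a = l ∧ b = k then 1 else 0) := by
    intro a b
    rw [coord_entry', hXt, Matrix.add_mulVec, vecMulVec_mulVec', vecMulVec_mulVec',
      dotProduct_add, dotProduct_smul, dotProduct_smul, horth a k, horth a l, horth l b,
      horth k b]
    simp only [smul_eq_mul]
    by_cases h1 : a = k <;> by_cases h2 : b = l <;> by_cases h3 : a = l <;>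
      by_cases h4 : b = k <;> simp_all <;> tauto
  have hXtherm : Xt.IsHermitian := by
    show _ᴴ = _
    rw [hXt, Matrix.conjTranspose_add]
    have h1 : ∀ (u w : Fin d → ℂ), (vecMulVec u (star w))ᴴ = vecMulVec w (star u) := by
      intro u w; ext i j
      simp [Matrix.conjTranspose_apply, vecMulVec_apply, mul_comm]
    rw [h1, h1, add_comm]
  have hmemXt : memX p v Xt := by
    refine ⟨hXtherm, fun a b hpa hpb => ?_⟩
    rw [← coord_entry', hcoordXt]
    have hc1 : ¬(a = k ∧ b = l) := by
      rintro ⟨rfl, rfl⟩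
      rw [hμ0, hpa, hpb] at hμ
      norm_num at hμ
    have hc2 : ¬(a = l ∧ b = k) := by
      rintro ⟨rfl, rfl⟩
      rw [hμ0, hpa, hpb] at hμ
      norm_num at hμ
    simp [hc1, hc2]
  have hckl : coord v Xt k l = if k = l then 2 else 1 := by
    rw [hcoordXt]
    by_cases h : k = l <;> simp [h] <;> norm_num
  have hnskl : 1 ≤ Complex.normSq (coord v Xt k l) := by
    rw [hckl]
    by_cases h : k = l <;> simp [h] <;> norm_num
  have hw := wip_self_coord hρ horth hXtherm
  have htnn : ∀ a b : Fin d, 0 ≤ ((p a + p b)/2) * Complex.normSq (coord v Xt a b) := by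
    intro a b
    have := hppos a; have := hppos b
    have := Complex.normSq_nonneg (coord v Xt a b)
    positivity
  have hwpos : 0 < wip ρ Xt Xt := by
    rw [hw]
    have h1 : μ0 ≤ ((p k + p l)/2) * Complex.normSq (coord v Xt k l) := by
      rw [← hμ0]
      nlinarith [hnskl, hμ]
    have h2 : ((p k + p l)/2) * Complex.normSq (coord v Xt k l)
        ≤ ∑ b, ((p k + p b)/2) * Complex.normSq (coord v Xt k b) :=
      Finset.single_le_sum (fun b _ => htnn k b) (Finset.mem_univ l)
    have h3 : ∑ b, ((p k + p b)/2) * Complex.normSq (coord v Xt k b)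
        ≤ ∑ a, ∑ b, ((p a + p b)/2) * Complex.normSq (coord v Xt a b) :=
      Finset.single_le_sum (f := fun a => ∑ b, ((p a + p b)/2) * Complex.normSq (coord v Xt a b))
        (fun a _ => Finset.sum_nonneg (fun b _ => htnn a b)) (Finset.mem_univ k)
    linarith
  have hRXt : wip ρ (Rop ρ Xt) Xt = μ0 * wip ρ Xt Xt := by
    rw [wip_coord hρ horth, wip_coord hρ horth, Finset.mul_sum]
    apply Finset.sum_congr rfl; intro a _
    rw [Finset.mul_sum]
    apply Finset.sum_congr rfl; intro b _
    rw [coord_Rop hρ horth]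
    by_cases hab : coord v Xt a b = 0
    · rw [hab]
      simp
    · have hμeq : (p a + p b)/2 = μ0 := by
        rw [hcoordXt] at hab
        by_cases h1 : a = k ∧ b = l
        · obtain ⟨rfl, rfl⟩ := h1
          rw [hμ0]
        · have h2 : a = l ∧ b = k := by
            by_contra h2
            simp [h1, h2] at hab
          obtain ⟨rfl, rfl⟩ := h2
          rw [hμ0]
          ring
      rw [hμeq]
      rw [show ((μ0:ℂ) * coord v Xt a b) * coord v Xt b a
          = (μ0:ℂ) * (coord v Xt a b * coord v Xt b a) by ring, Complex.re_ofReal_mul]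
  obtain ⟨hb1, hb2⟩ := hbounds Xt hmemXt
  rw [hRXt] at hb1 hb2
  constructor
  · nlinarith [hb1, hwpos]
  · nlinarith [hb2, hwpos]

end Orth

/-- Exponential convergence of the Krylov bounds: the relative gap satisfies the
conjugate-gradient bound with condition number κ = λ_max/λ_min of R_ρ on 𝒳. -/
theorem stmt9 {d : ℕ} (ρ : Matrix (Fin d) (Fin d) ℂ) (p : Fin d → ℝ) (v : Fin d → (Fin d → ℂ))
    (hρ : ρ = ∑ k, (p k : ℂ) • vecMulVec (v k) (star (v k)))
    (horth : ∀ k l, star (v k) ⬝ᵥ v l = (if k = l then 1 else 0))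
    (hppos : ∀ k, 0 ≤ p k) (hptr : ∑ k, p k = 1) (H : Matrix (Fin d) (Fin d) ℂ) (hH : H.IsHermitian)
    (L : Matrix (Fin d) (Fin d) ℂ) (hLX : memX p v L) (hL : Rop ρ L = comm ρ H)
    (lmin lmax : ℝ) (hlmin : 0 < lmin) (hle : lmin ≤ lmax)
    (hbounds : ∀ X, memX p v X →
      lmin * wip ρ X X ≤ wip ρ (Rop ρ X) X ∧ wip ρ (Rop ρ X) X ≤ lmax * wip ρ X X)
    (hFQ : 0 < wip ρ L L) :
    ∀ (n : ℕ) (P), IsProj ρ H n L P →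
      (wip ρ L L - wip ρ P P) / wip ρ L L ≤
        4 * ((Real.sqrt (lmax / lmin) - 1) / (Real.sqrt (lmax / lmin) + 1)) ^ (2 * n) := by
  intro n P hP
  obtain ⟨hPK, hPo⟩ := hP
  set σ : ℝ := (Real.sqrt (lmax / lmin) - 1) / (Real.sqrt (lmax / lmin) + 1) with hσdef
  have hρh : ρ.IsHermitian := rho_herm hρ horth
  have hσnn : 0 ≤ σ := by
    have hκ : 1 ≤ lmax / lmin := (one_le_div hlmin).mpr hle
    have : 1 ≤ Real.sqrt (lmax / lmin) := by
      rw [show (1:ℝ) = Real.sqrt 1 by simp]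
      exact Real.sqrt_le_sqrt hκ
    have h2 : 0 < Real.sqrt (lmax/lmin) + 1 := by linarith
    rw [hσdef]
    apply div_nonneg (by linarith) h2.le
  have hσ4 : (2 * σ ^ n) ^ 2 = 4 * σ ^ (2 * n) := by
    rw [mul_pow, ← pow_mul, mul_comm n 2]
    norm_num
  obtain ⟨g, hgdeg, hgbound⟩ := cheb_exists lmin lmax hlmin hle n
  set Q : Matrix (Fin d) (Fin d) ℂ :=
    ∑ j ∈ Finset.range n, g.coeff j • (Rop ρ)^[j] (comm ρ H) with hQdef
  have hQK : Q ∈ K ρ H n := by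
    apply Submodule.sum_mem
    intro j hj
    apply Submodule.smul_mem
    apply Submodule.subset_span
    exact ⟨j, Finset.mem_range.mp hj, rfl⟩
  have hKherm : ∀ Y ∈ K ρ H n, Y.IsHermitian := fun Y hY => K_herm hρh hH hY
  have hPherm := hKherm P hPK
  have hQherm := hKherm Q hQK
  have hLherm := hLX.1
  -- eval of g as finite sum
  have hgeval : ∀ x : ℝ, ∑ j ∈ Finset.range n, g.coeff j * x ^ j = g.eval x := by
    rcases hgdeg with h | h
    · subst h
      intro x
      simp
    · intro x
      rw [Polynomial.eval_eq_sum_range' h]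
  -- coordinates of L - Q
  have hcoordLQ : ∀ k l, coord v (L - Q) k l =
      ((1 - (p k + p l)/2 * g.eval ((p k + p l)/2) : ℝ) : ℂ) * coord v L k l := by
    intro k l
    have hcomm : coord v (comm ρ H) k l = (((p k + p l)/2 : ℝ) : ℂ) * coord v L k l := by
      rw [← hL, coord_Rop hρ horth]
    have hQc : coord v Q k l =
        ((∑ j ∈ Finset.range n, g.coeff j * ((p k + p l)/2) ^ j) * ((p k + p l)/2) : ℝ) *
          coord v L k l := by
      rw [hQdef, coord_sum, Matrix.sum_apply]
      have hterm : ∀ j ∈ Finset.range n, coord v (g.coeff j • (Rop ρ)^[j] (comm ρ H)) k l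
          = ((g.coeff j * ((p k + p l)/2)^j * ((p k + p l)/2) : ℝ) : ℂ) * coord v L k l := by
        intro j _
        rw [coord_smul, Matrix.smul_apply, coord_Rop_iter hρ horth, hcomm, Complex.real_smul]
        push_cast
        ring
      rw [Finset.sum_congr rfl hterm, ← Finset.sum_mul]
      congr 1
      push_cast
      rw [Finset.sum_mul]
    rw [coord_sub, Matrix.sub_apply, hQc, hgeval]
    push_cast
    ring
  -- gap identity
  have horthoP : wip ρ (L - P) P = 0 := hPo P hPK
  have hgap : wip ρ L L - wip ρ P P = wip ρ (L - P) (L - P) := by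
    have h1 : wip ρ (L - P) (L - P) = wip ρ (L - P) L - wip ρ (L - P) P := by
      rw [wip_comm (L-P) (L-P), wip_sub_left hρ horth, wip_comm L (L-P), wip_comm P (L-P)]
    have h2 : wip ρ (L - P) L = wip ρ L L - wip ρ P L := wip_sub_left hρ horth L P L
    have h3 : wip ρ (L - P) P = wip ρ L P - wip ρ P P := wip_sub_left hρ horth L P P
    have h4 : wip ρ P L = wip ρ L P := wip_comm P L
    rw [h3] at horthoP
    rw [h1, h2, h3, h4]
    linarith [horthoP]
  -- minimality
  have hmin : wip ρ (L - P) (L - P) ≤ wip ρ (L - Q) (L - Q) := by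
    have wadd_r : ∀ (X Y Z : Matrix (Fin d) (Fin d) ℂ),
        wip ρ X (Y + Z) = wip ρ X Y + wip ρ X Z := by
      intro X Y Z
      rw [wip_comm X (Y+Z), wip_add_left hρ horth, wip_comm Y X, wip_comm Z X]
    have hPQK : P - Q ∈ K ρ H n := Submodule.sub_mem _ hPK hQK
    have hsplit : L - Q = (L - P) + (P - Q) := (sub_add_sub_cancel L P Q).symm
    have hcross : wip ρ (L - P) (P - Q) = 0 := hPo _ hPQK
    have hcross2 : wip ρ (P - Q) (L - P) = 0 := by
      rw [wip_comm (P-Q) (L-P)]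
      exact hcross
    have hnn : 0 ≤ wip ρ (P - Q) (P - Q) :=
      wip_self_nonneg hρ horth hppos (hPherm.sub hQherm)
    have hexp : wip ρ (L - Q) (L - Q)
        = wip ρ (L - P) (L - P) + wip ρ (L - P) (P - Q) + (wip ρ (P - Q) (L - P)
          + wip ρ (P - Q) (P - Q)) := by
      rw [hsplit, wip_add_left hρ horth, wadd_r, wadd_r]
    rw [hexp, hcross, hcross2]
    linarith
  -- bound on wip (L-Q)
  have hFsum : wip ρ L L = ∑ k, ∑ l, ((p k + p l)/2) * Complex.normSq (coord v L k l) :=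
    wip_self_coord hρ horth hLherm
  have hQb : wip ρ (L - Q) (L - Q) ≤ 4 * σ ^ (2*n) * wip ρ L L := by
    rw [wip_self_coord hρ horth (hLherm.sub hQherm), hFsum, Finset.mul_sum]
    apply Finset.sum_le_sum
    intro k _
    rw [Finset.mul_sum]
    apply Finset.sum_le_sum
    intro l _
    rw [hcoordLQ k l, Complex.normSq_mul, Complex.normSq_ofReal]
    set μ : ℝ := (p k + p l)/2 with hμdef
    set ns : ℝ := Complex.normSq (coord v L k l) with hnsdef
    have hμnn : 0 ≤ μ := by
      have := hppos k; have := hppos l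
      rw [hμdef]; linarith
    have hnsnn : 0 ≤ ns := Complex.normSq_nonneg _
    rcases eq_or_lt_of_le hμnn with hμ0 | hμpos
    · rw [← hμ0]
      ring_nf
      simp
    · have hb := mu_bounds hρ horth hppos hbounds k l hμpos
      have habs : |1 - μ * g.eval μ| ≤ 2 * σ ^ n := hgbound μ hb.1 hb.2
      have hsq : (1 - μ * g.eval μ) * (1 - μ * g.eval μ) ≤ 4 * σ ^ (2*n) := by
        have h1 : (1 - μ * g.eval μ) * (1 - μ * g.eval μ) = |1 - μ * g.eval μ|^2 := by
          rw [sq_abs]; ring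
        rw [h1, ← hσ4]
        apply pow_le_pow_left₀ (abs_nonneg _) habs
      calc μ * ((1 - μ * g.eval μ) * (1 - μ * g.eval μ) * ns)
          ≤ μ * (4 * σ ^ (2*n) * ns) := by
            apply mul_le_mul_of_nonneg_left (mul_le_mul_of_nonneg_right hsq hnsnn) hμnn
        _ = 4 * σ ^ (2*n) * (μ * ns) := by ring
  -- conclusion
  rw [div_le_iff₀ hFQ, hgap]
  calc wip ρ (L - P) (L - P) ≤ wip ρ (L - Q) (L - Q) := hmin
    _ ≤ 4 * σ ^ (2*n) * wip ρ L L := hQb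

end KST
end

section
/- The stabilization order n* of the Krylov subspace sequence satisfies n* ≤ 𝒩[S], where S = {p_i + p_j : p_i ≠ p_j} is the set of sums of distinct pairs of eigenvalues of ρ and 𝒩[S] is the number of distinct values in S. -/
/-!
Write `ρ = Σ p_k P_k` with `P_k = |k⟩⟨k|`. Every matrix is `Σ_{i,j} P_i X P_j`, and `R_ρ`
multiplies the block `P_i X P_j` by `(p_i + p_j)/2`, while the block
`P_i i[ρ,H] P_j = i(p_i - p_j) P_i H P_j` vanishes when `p_i = p_j`. Hence `q(R_ρ)` kills
`i[ρ,H]` for the monic `q = Π_{s ∈ S} (X - s/2)` of degree `𝒩[S]`, which expresses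
`R_ρ^{𝒩[S]}(i[ρ,H])` through lower powers, so `𝒦_{𝒩[S]+1} = 𝒦_{𝒩[S]}`.
-/

open Matrix BigOperators Finset
open scoped Classical

namespace KST

variable {d : ℕ}

open Polynomial

section Krylov

variable {R M : Type*} [CommRing R] [AddCommGroup M] [Module R M]

theorem iterate_natDegree_mem_span_of_aeval_eq_zero (f : Module.End R M) {q : R[X]}
    (hq : q.Monic) {x : M} (hx : aeval f q x = 0) :
    f^[q.natDegree] x ∈ Submodule.span R ((fun k => f^[k] x) '' Set.Iio q.natDegree) := by
  have hsum : f^[q.natDegree] x = -∑ i ∈ range q.natDegree, q.coeff i • f^[i] x := by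
    rw [hq.as_sum] at hx
    simp only [map_add, map_sum, map_pow, map_mul, aeval_X, aeval_C, LinearMap.add_apply,
      LinearMap.sum_apply, Module.End.mul_apply, Module.algebraMap_end_apply,
      Module.End.pow_apply] at hx
    exact eq_neg_of_add_eq_zero_left hx
  rw [hsum]
  exact Submodule.neg_mem _ <| Submodule.sum_mem _ fun i hi =>
    Submodule.smul_mem _ _ <| Submodule.subset_span ⟨i, Finset.mem_range.mp hi, rfl⟩

theorem span_image_Iio_succ_eq {g : ℕ → M} {n : ℕ}
    (h : g n ∈ Submodule.span R (g '' Set.Iio n)) :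
    Submodule.span R (g '' Set.Iio (n + 1)) = Submodule.span R (g '' Set.Iio n) := by
  rw [← Order.succ_eq_add_one, Order.Iio_succ_eq_insert, Set.image_insert_eq,
    Submodule.span_insert_eq_span h]

end Krylov

section Spectral

variable {R : Type*} [CommRing R] [StarRing R] {ι : Type*} [Fintype ι] [DecidableEq ι]
  {v : ι → ι → R}

theorem sum_vecMulVec_star_self_eq_one
    (horth : ∀ k l, star (v k) ⬝ᵥ v l = if k = l then 1 else 0) :
    ∑ k, vecMulVec (v k) (star (v k)) = 1 := by
  set U : Matrix ι ι R := Matrix.of fun i k => v k i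
  have hUU : Uᴴ * U = 1 := by
    ext k l
    simpa [U, mul_apply, one_apply, dotProduct] using horth k l
  ext a b
  have h : (U * Uᴴ) a b = (1 : Matrix ι ι R) a b := by rw [mul_eq_one_comm.mp hUU]
  simpa [U, mul_apply, Matrix.sum_apply, vecMulVec_apply] using h

theorem mul_vecMulVec_star_self {ρ : Matrix ι ι R} {c : ι → R}
    (hρ : ρ = ∑ k, c k • vecMulVec (v k) (star (v k)))
    (horth : ∀ k l, star (v k) ⬝ᵥ v l = if k = l then 1 else 0) (l : ι) :
    ρ * vecMulVec (v l) (star (v l)) = c l • vecMulVec (v l) (star (v l)) := by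
  simp [hρ, Finset.sum_mul, vecMulVec_mul_vecMulVec, horth, apply_ite (vecMulVec _), smul_ite]

theorem vecMulVec_star_self_mul {ρ : Matrix ι ι R} {c : ι → R}
    (hρ : ρ = ∑ k, c k • vecMulVec (v k) (star (v k)))
    (horth : ∀ k l, star (v k) ⬝ᵥ v l = if k = l then 1 else 0) (l : ι) :
    vecMulVec (v l) (star (v l)) * ρ = c l • vecMulVec (v l) (star (v l)) := by
  simp [hρ, Finset.mul_sum, vecMulVec_mul_vecMulVec, horth, apply_ite (vecMulVec _), smul_ite]

end Spectral

theorem eq_sum_mul_mul_of_sum_eq_one {ι A : Type*} [Fintype ι] [NonAssocSemiring A] {P : ι → A}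
    (hP : ∑ i, P i = 1) (X : A) : X = ∑ i, ∑ j, P i * X * P j := by
  simp_rw [← Finset.mul_sum, ← Finset.sum_mul, hP, one_mul, mul_one]

-- Real-linear, because `𝒦_n` is a real span and the annihilating polynomial has real roots.
noncomputable def RopLinear (ρ : Matrix (Fin d) (Fin d) ℂ) :
    Module.End ℝ (Matrix (Fin d) (Fin d) ℂ) where
  toFun := Rop ρ
  map_add' X Y := by
    simp only [Rop, mul_add, add_mul, smul_add]
    abel
  map_smul' c X := by
    simp only [Rop, mul_smul_comm, smul_mul_assoc, ← smul_add, RingHom.id_apply]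
    rw [smul_comm]

theorem coe_RopLinear (ρ : Matrix (Fin d) (Fin d) ℂ) : ⇑(RopLinear ρ) = Rop ρ := rfl

section Blocks

variable {ι : Type*} {ρ : Matrix (Fin d) (Fin d) ℂ} {P : ι → Matrix (Fin d) (Fin d) ℂ}
  {p : ι → ℝ}

theorem Rop_mul_mul_eq_smul (hρP : ∀ i, ρ * P i = (p i : ℂ) • P i)
    (hPρ : ∀ i, P i * ρ = (p i : ℂ) • P i)
    (X : Matrix (Fin d) (Fin d) ℂ) (i j : ι) :
    Rop ρ (P i * X * P j) = ((p i + p j) / 2) • (P i * X * P j) := by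
  rw [Rop, ← mul_assoc ρ, ← mul_assoc ρ, hρP, mul_assoc (P i * X), hPρ,
    ← Complex.coe_smul]
  simp only [smul_mul_assoc, mul_smul_comm, ← add_smul, smul_smul]
  congr 1
  push_cast
  ring

theorem mul_comm_mul_eq_smul (hρP : ∀ i, ρ * P i = (p i : ℂ) • P i)
    (hPρ : ∀ i, P i * ρ = (p i : ℂ) • P i)
    (H : Matrix (Fin d) (Fin d) ℂ) (i j : ι) :
    P i * comm ρ H * P j = (Complex.I * (p i - p j)) • (P i * H * P j) := by
  simp only [comm, mul_smul_comm, smul_mul_assoc, mul_sub, sub_mul, ← mul_assoc, hPρ]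
  simp only [mul_assoc, hρP, mul_smul_comm, ← sub_smul, smul_smul, mul_sub]

theorem aeval_Rop_comm_eq_zero [Fintype ι] (hP : ∑ i, P i = 1)
    (hρP : ∀ i, ρ * P i = (p i : ℂ) • P i)
    (hPρ : ∀ i, P i * ρ = (p i : ℂ) • P i) (H : Matrix (Fin d) (Fin d) ℂ) {S : Finset ℝ}
    (hS : ∀ i j, p i ≠ p j → p i + p j ∈ S) :
    aeval (RopLinear ρ) (∏ s ∈ S, (X - C (s / 2))) (comm ρ H) = 0 := by
  rw [eq_sum_mul_mul_of_sum_eq_one hP (comm ρ H), map_sum]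
  refine Finset.sum_eq_zero fun i _ => ?_
  rw [map_sum]
  refine Finset.sum_eq_zero fun j _ => ?_
  rw [Module.End.aeval_apply_of_mem_apply_eq_smul (Rop_mul_mul_eq_smul hρP hPρ _ i j)]
  by_cases hij : p i = p j
  · rw [mul_comm_mul_eq_smul hρP hPρ, hij, sub_self, mul_zero, zero_smul, smul_zero]
  · rw [eval_prod, Finset.prod_eq_zero (hS i j hij) (by simp), zero_smul]

end Blocks

theorem K_succ_eq_of_aeval_eq_zero {ρ H : Matrix (Fin d) (Fin d) ℂ} {q : ℝ[X]} (hq : q.Monic)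
    (hann : aeval (RopLinear ρ) q (comm ρ H) = 0) :
    K ρ H (q.natDegree + 1) = K ρ H q.natDegree := by
  have hmem := iterate_natDegree_mem_span_of_aeval_eq_zero _ hq hann
  rw [coe_RopLinear] at hmem
  exact span_image_Iio_succ_eq hmem

theorem stmt11_general {d : ℕ} (ρ : Matrix (Fin d) (Fin d) ℂ) (p : Fin d → ℝ) (v : Fin d → (Fin d → ℂ))
    (hρ : ρ = ∑ k, (p k : ℂ) • vecMulVec (v k) (star (v k)))
    (horth : ∀ k l, star (v k) ⬝ᵥ v l = (if k = l then 1 else 0))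
    (H : Matrix (Fin d) (Fin d) ℂ)
    (nstar : ℕ) (hstar : IsLeast {n : ℕ | K ρ H (n + 1) = K ρ H n} nstar) :
    nstar ≤ ((Finset.univ.filter fun kl : Fin d × Fin d => p kl.1 ≠ p kl.2).image
      fun kl => p kl.1 + p kl.2).card := by
  set S := (Finset.univ.filter fun kl : Fin d × Fin d => p kl.1 ≠ p kl.2).image
    fun kl => p kl.1 + p kl.2
  have hann : aeval (RopLinear ρ) (∏ s ∈ S, (X - C (s / 2))) (comm ρ H) = 0 :=
    aeval_Rop_comm_eq_zero (sum_vecMulVec_star_self_eq_one horth)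
      (mul_vecMulVec_star_self hρ horth) (vecMulVec_star_self_mul hρ horth) H
      fun i j hij => Finset.mem_image.2 ⟨(i, j), by simpa using hij, rfl⟩
  have hstable := K_succ_eq_of_aeval_eq_zero (monic_prod_X_sub_C _ _) hann
  rw [natDegree_finsetProd_X_sub_C_eq_card] at hstable
  exact hstar.2 hstable

/-- The stabilization order n* is at most the number of distinct values in
S = {p_i + p_j : p_i ≠ p_j}. -/
theorem stmt11 {d : ℕ} (ρ : Matrix (Fin d) (Fin d) ℂ) (p : Fin d → ℝ) (v : Fin d → (Fin d → ℂ))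
    (hρ : ρ = ∑ k, (p k : ℂ) • vecMulVec (v k) (star (v k)))
    (horth : ∀ k l, star (v k) ⬝ᵥ v l = (if k = l then 1 else 0))
    (hppos : ∀ k, 0 ≤ p k) (hptr : ∑ k, p k = 1) (H : Matrix (Fin d) (Fin d) ℂ) (hH : H.IsHermitian)
    (nstar : ℕ) (hstar : IsLeast {n : ℕ | K ρ H (n + 1) = K ρ H n} nstar) :
    nstar ≤ ((Finset.univ.filter fun kl : Fin d × Fin d => p kl.1 ≠ p kl.2).image
      fun kl => p kl.1 + p kl.2).card :=
  stmt11_general ρ p v hρ horth H nstar hstar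

end KST
end

section
/- The exact stabilization order is n* = 𝒩[S] − 𝒩[J], where J = {μ ∈ S : ⟨i|H|j⟩ = 0 for all eigenvector pairs with p_i ≠ p_j and p_i + p_j = μ}; i.e., n* equals the number of distinct eigenvalue-pair sums μ for which H has a nonzero matrix element between the corresponding eigenspaces. -/
open Matrix BigOperators Finset
open scoped Classical

/-!
In the eigenbasis of `ρ`, the map `R_ρ` multiplies the `(i, j)` entry by `(p i + p j) / 2` and
`i[ρ, H]` has entries `w i j = i (p i - p j) ⟨i|H|j⟩`, so the `k`-th Krylov vector has entries
`((p i + p j) / 2) ^ k * w i j`. A relation `R_ρ^n c = ∑_{k<n} c_k R_ρ^k c` therefore holds iff the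
monic polynomial `X ^ n - ∑ c_k X ^ k` vanishes at every value `(p i + p j) / 2` with `w i j ≠ 0`,
and such a polynomial exists iff `n` is at least the number of these values. Hence `n*` is the
number of sums `p i + p j`, `p i ≠ p j`, carried by a nonzero matrix element of `H`, which is
`𝒩[S] - 𝒩[J]`.
-/

open Function Polynomial Submodule

theorem Polynomial.exists_pow_eq_sum_iff_card_le {R : Type*} [CommRing R] [IsDomain R]
    (Φ : Finset R) (n : ℕ) :
    (∃ c : Fin n → R, ∀ μ ∈ Φ, ∑ k, c k * μ ^ (k : ℕ) = μ ^ n) ↔ Φ.card ≤ n := by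
  constructor
  · rintro ⟨c, hc⟩
    have hlt : degree (∑ k, C (c k) * X ^ (k : ℕ)) < degree (X ^ n : R[X]) := by
      simpa using degree_sum_fin_lt c
    set q : R[X] := X ^ n - ∑ k, C (c k) * X ^ (k : ℕ)
    have hq0 : q ≠ 0 := (monic_X_pow_sub (by simpa using hlt)).ne_zero
    calc Φ.card ≤ q.natDegree := card_le_degree_of_subset_roots fun μ hμ => by
          rw [mem_roots hq0, IsRoot, eval_sub, eval_finsetSum, sub_eq_zero]
          simpa using (hc μ hμ).symm
      _ = n := natDegree_eq_of_degree_eq_some (by rw [degree_sub_eq_left_of_degree_lt hlt]; simp)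
  · intro hn
    set Q : R[X] := X ^ (n - Φ.card) * Lagrange.nodal Φ id
    have hQ : Q.Monic := (monic_X_pow _).mul Lagrange.nodal_monic
    have hdeg : Q.natDegree = n := by
      rw [(monic_X_pow _).natDegree_mul Lagrange.nodal_monic, natDegree_X_pow,
        Lagrange.natDegree_nodal]
      omega
    refine ⟨fun k => -Q.coeff k, fun μ hμ => ?_⟩
    have h0 : Q.eval μ = 0 := by
      rw [eval_mul, show μ = id μ from rfl, Lagrange.eval_nodal_at_node hμ, mul_zero]
    rw [hQ.as_sum, hdeg, eval_add, eval_finsetSum, Finset.sum_range] at h0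
    simp only [eval_mul, eval_C, eval_pow, eval_X, neg_mul, Finset.sum_neg_distrib] at h0 ⊢
    linear_combination -h0

theorem Submodule.span_image_Iio_succ_eq_iff {R M : Type*} [Semiring R] [AddCommMonoid M]
    [Module R M] (x : ℕ → M) (n : ℕ) :
    span R (x '' Set.Iio (n + 1)) = span R (x '' Set.Iio n) ↔
      ∃ c : Fin n → R, ∑ k, c k • x k = x n := by
  have hrange : x '' Set.Iio n = Set.range fun k : Fin n => x k := by ext; simp [Fin.exists_iff]
  have hinsert : x '' Set.Iio (n + 1) = insert (x n) (x '' Set.Iio n) := by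
    rw [← Set.image_insert_eq, ← Order.Iio_succ_eq_insert]; rfl
  rw [hinsert, ← mem_span_range_iff_exists_fun, ← hrange]
  exact ⟨fun h => h ▸ subset_span (Set.mem_insert _ _), span_insert_eq_span⟩

section DiagonalKrylov
variable {K V ι : Type*} [Field K] [AddCommGroup V] [Module K V]

theorem sum_smul_pow_smul_eq_pow_smul_iff (lam : ι → K) (w : ι → V) {n : ℕ} (c : Fin n → K) :
    ∑ k, c k • (fun a => lam a ^ (k : ℕ) • w a) = (fun a => lam a ^ n • w a) ↔
      ∀ a, w a ≠ 0 → ∑ k, c k * lam a ^ (k : ℕ) = lam a ^ n := by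
  simp only [funext_iff, Finset.sum_apply, Pi.smul_apply, smul_smul, ← Finset.sum_smul]
  refine forall_congr' fun a => ?_
  rw [← sub_eq_zero, ← sub_smul, smul_eq_zero, sub_eq_zero, or_iff_not_imp_right]

theorem isLeast_span_image_Iio_succ_eq [Fintype ι] [DecidableEq K] [DecidableEq V]
    {M : Type*} [AddCommGroup M] [Module K M]
    (x : ℕ → M) (f : M →ₗ[K] ι → V) (hf : Injective f) (lam : ι → K) (w : ι → V)
    (hx : ∀ k, f (x k) = fun a => lam a ^ k • w a) :
    IsLeast {n | span K (x '' Set.Iio (n + 1)) = span K (x '' Set.Iio n)}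
      ((Finset.univ.filter fun a => w a ≠ 0).image lam).card := by
  suffices h : {n | span K (x '' Set.Iio (n + 1)) = span K (x '' Set.Iio n)} =
      Set.Ici ((Finset.univ.filter fun a => w a ≠ 0).image lam).card from h ▸ isLeast_Ici
  ext n
  rw [Set.mem_ofPred_eq, Set.mem_Ici, span_image_Iio_succ_eq_iff,
    ← exists_pow_eq_sum_iff_card_le]
  refine exists_congr fun c => ?_
  simp only [← hf.eq_iff, map_sum, map_smul, hx, sum_smul_pow_smul_eq_pow_smul_iff,
    Finset.forall_mem_image, Finset.mem_filter, Finset.mem_univ, true_and]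

end DiagonalKrylov

theorem card_image_add_filter_ne_zero {ι M : Type*} [Fintype ι] [Zero M]
    (p : ι → ℝ) (c : ι → ι → M) :
    ((Finset.univ.filter fun a : ι × ι => p a.1 ≠ p a.2 ∧ c a.1 a.2 ≠ 0).image
        fun a => p a.1 + p a.2).card =
      ((Finset.univ.filter fun kl : ι × ι => p kl.1 ≠ p kl.2).image
        fun kl => p kl.1 + p kl.2).card -
      (((Finset.univ.filter fun kl : ι × ι => p kl.1 ≠ p kl.2).image
        fun kl => p kl.1 + p kl.2).filter
          fun μ => ∀ i j, p i ≠ p j → p i + p j = μ → c i j = 0).card := by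
  set S := (Finset.univ.filter fun kl : ι × ι => p kl.1 ≠ p kl.2).image
    fun kl => p kl.1 + p kl.2
  have hS : (Finset.univ.filter fun a : ι × ι => p a.1 ≠ p a.2 ∧ c a.1 a.2 ≠ 0).image
      (fun a => p a.1 + p a.2) =
        S.filter fun μ => ¬ ∀ i j, p i ≠ p j → p i + p j = μ → c i j = 0 := by
    ext μ
    simp only [S, Finset.mem_image, Finset.mem_filter, Finset.mem_univ, true_and, not_forall,
      Prod.exists]
    constructor
    · rintro ⟨i, j, ⟨hp, hc⟩, rfl⟩
      exact ⟨⟨i, j, hp, rfl⟩, i, j, hp, rfl, hc⟩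
    · rintro ⟨-, i, j, hp, rfl, hc⟩
      exact ⟨i, j, ⟨hp, hc⟩, rfl⟩
  rw [hS, ← Finset.card_filter_add_card_filter_not (s := S)
    (fun μ => ∀ i j, p i ≠ p j → p i + p j = μ → c i j = 0)]
  omega

namespace KST

variable {d : ℕ}

theorem semiconj_Rop {ρ D A B : Matrix (Fin d) (Fin d) ℂ} (hA : A * ρ = D * A)
    (hB : ρ * B = B * D) : Semiconj (fun X => A * X * B) (Rop ρ) (Rop D) := fun X => by
  simp only [Rop, Matrix.mul_smul, Matrix.smul_mul, Matrix.mul_add, Matrix.add_mul,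
    ← Matrix.mul_assoc, hA]
  simp only [Matrix.mul_assoc, hB]

theorem comm_intertwine {ρ D A B : Matrix (Fin d) (Fin d) ℂ} (hA : A * ρ = D * A)
    (hB : ρ * B = B * D) (H : Matrix (Fin d) (Fin d) ℂ) :
    A * comm ρ H * B = comm D (A * H * B) := by
  simp only [comm, Matrix.mul_smul, Matrix.smul_mul, Matrix.mul_sub, Matrix.sub_mul,
    ← Matrix.mul_assoc, hA]
  simp only [Matrix.mul_assoc, hB]

theorem Rop_diagonal_apply (q : Fin d → ℂ) (Y : Matrix (Fin d) (Fin d) ℂ) (i j : Fin d) :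
    Rop (diagonal q) Y i j = (q i + q j) / 2 * Y i j := by
  simp only [Rop, Matrix.smul_apply, Matrix.add_apply, diagonal_mul, mul_diagonal, smul_eq_mul]
  ring

theorem iterate_Rop_diagonal_apply (q : Fin d → ℂ) (Y : Matrix (Fin d) (Fin d) ℂ) (k : ℕ)
    (i j : Fin d) : (Rop (diagonal q))^[k] Y i j = ((q i + q j) / 2) ^ k * Y i j := by
  induction k with
  | zero => simp
  | succ k ih => rw [iterate_succ_apply', Rop_diagonal_apply, ih, pow_succ', mul_assoc]

theorem comm_diagonal_apply (q : Fin d → ℂ) (G : Matrix (Fin d) (Fin d) ℂ) (i j : Fin d) :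
    comm (diagonal q) G i j = Complex.I * (q i - q j) * G i j := by
  simp only [comm, Matrix.smul_apply, Matrix.sub_apply, diagonal_mul, mul_diagonal, smul_eq_mul]
  ring

def entriesLinearMap (A B : Matrix (Fin d) (Fin d) ℂ) :
    Matrix (Fin d) (Fin d) ℂ →ₗ[ℝ] (Fin d × Fin d → ℂ) where
  toFun X a := (A * X * B) a.1 a.2
  map_add' X Y := by ext; simp [Matrix.mul_add, Matrix.add_mul]
  map_smul' r X := by ext; simp

theorem entriesLinearMap_apply (A B X : Matrix (Fin d) (Fin d) ℂ) (a : Fin d × Fin d) :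
    entriesLinearMap A B X a = (A * X * B) a.1 a.2 := rfl

theorem entriesLinearMap_injective {U : Matrix (Fin d) (Fin d) ℂ} (hU : U * Uᴴ = 1) :
    Injective (entriesLinearMap Uᴴ U) := by
  have hconj (Z : Matrix (Fin d) (Fin d) ℂ) : U * (Uᴴ * Z * U) * Uᴴ = Z := by
    simp only [← Matrix.mul_assoc, hU, Matrix.one_mul]
    rw [Matrix.mul_assoc, hU, Matrix.mul_one]
  intro X Y h
  have h' : Uᴴ * X * U = Uᴴ * Y * U := by ext i j; exact congrFun h (i, j)
  rw [← hconj X, h', hconj]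

theorem entriesLinearMap_iterate_Rop_comm {U : Matrix (Fin d) (Fin d) ℂ} (hU : Uᴴ * U = 1)
    (q : Fin d → ℂ) (H : Matrix (Fin d) (Fin d) ℂ) (k : ℕ) :
    entriesLinearMap Uᴴ U
        ((Rop (U * diagonal q * Uᴴ))^[k] (comm (U * diagonal q * Uᴴ) H)) =
      fun a => ((q a.1 + q a.2) / 2) ^ k *
        (Complex.I * (q a.1 - q a.2) * (Uᴴ * H * U) a.1 a.2) := by
  have hA : Uᴴ * (U * diagonal q * Uᴴ) = diagonal q * Uᴴ := by
    simp only [← Matrix.mul_assoc, hU, Matrix.one_mul]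
  have hB : U * diagonal q * Uᴴ * U = U * diagonal q := by
    simp only [Matrix.mul_assoc, hU, Matrix.mul_one]
  have hiter : Uᴴ * (Rop (U * diagonal q * Uᴴ))^[k] (comm (U * diagonal q * Uᴴ) H) * U =
      (Rop (diagonal q))^[k] (comm (diagonal q) (Uᴴ * H * U)) := by
    rw [← comm_intertwine hA hB]
    exact (semiconj_Rop hA hB).iterate_right k _
  funext a
  rw [entriesLinearMap_apply, hiter, iterate_Rop_diagonal_apply, comm_diagonal_apply]

section Eigenbasis
variable (v : Fin d → Fin d → ℂ)

def eigvecMatrix : Matrix (Fin d) (Fin d) ℂ := Matrix.of fun x k => v k x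

theorem conjTranspose_eigvecMatrix_mul_self
    (horth : ∀ k l, star (v k) ⬝ᵥ v l = (if k = l then 1 else 0)) :
    (eigvecMatrix v)ᴴ * eigvecMatrix v = 1 := by
  ext k l
  simpa [eigvecMatrix, Matrix.mul_apply, Matrix.one_apply, dotProduct] using horth k l

theorem sum_smul_vecMulVec_eq_eigvecMatrix_mul (p : Fin d → ℝ) :
    ∑ k, (p k : ℂ) • vecMulVec (v k) (star (v k)) =
      eigvecMatrix v * diagonal (fun k => (p k : ℂ)) * (eigvecMatrix v)ᴴ := by
  ext x y
  simp only [Complex.coe_smul, Matrix.sum_apply, Matrix.smul_apply, vecMulVec_apply,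
    Pi.star_apply, RCLike.star_def, Complex.real_smul, eigvecMatrix, diagonal, Matrix.mul_apply,
    of_apply, mul_ite, mul_zero, Finset.sum_ite_eq', Finset.mem_univ, if_true,
    conjTranspose_apply]
  exact Finset.sum_congr rfl fun k _ => by ring

theorem conjTranspose_eigvecMatrix_mul_mul_apply (H : Matrix (Fin d) (Fin d) ℂ) (i j : Fin d) :
    ((eigvecMatrix v)ᴴ * H * eigvecMatrix v) i j = star (v i) ⬝ᵥ H *ᵥ v j := by
  simp only [eigvecMatrix, Matrix.mul_apply, conjTranspose_apply, of_apply, RCLike.star_def,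
    Finset.sum_mul, dotProduct, Pi.star_apply, mulVec, Finset.mul_sum]
  rw [Finset.sum_comm]
  exact Finset.sum_congr rfl fun x _ => Finset.sum_congr rfl fun y _ => by ring

end Eigenbasis

theorem stmt13_general {d : ℕ} (ρ : Matrix (Fin d) (Fin d) ℂ) (p : Fin d → ℝ) (v : Fin d → (Fin d → ℂ))
    (hρ : ρ = ∑ k, (p k : ℂ) • vecMulVec (v k) (star (v k)))
    (horth : ∀ k l, star (v k) ⬝ᵥ v l = (if k = l then 1 else 0))
    (H : Matrix (Fin d) (Fin d) ℂ)
    (nstar : ℕ) (hstar : IsLeast {n : ℕ | K ρ H (n + 1) = K ρ H n} nstar) :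
    nstar =
      ((Finset.univ.filter fun kl : Fin d × Fin d => p kl.1 ≠ p kl.2).image
        fun kl => p kl.1 + p kl.2).card -
      (((Finset.univ.filter fun kl : Fin d × Fin d => p kl.1 ≠ p kl.2).image
        fun kl => p kl.1 + p kl.2).filter fun μ =>
          ∀ i j, p i ≠ p j → p i + p j = μ →
            star (v i) ⬝ᵥ H.mulVec (v j) = 0).card := by
  have hU := conjTranspose_eigvecMatrix_mul_self v horth
  rw [sum_smul_vecMulVec_eq_eigvecMatrix_mul] at hρ
  subst hρ
  have hleast := isLeast_span_image_Iio_succ_eq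
    (fun k => (Rop _)^[k] (comm _ H)) _ (entriesLinearMap_injective (mul_eq_one_comm.mp hU))
    (fun a : Fin d × Fin d => (p a.1 + p a.2) / 2)
    (fun a => Complex.I * (p a.1 - p a.2 : ℂ) * (star (v a.1) ⬝ᵥ H *ᵥ v a.2))
    fun k => by
      rw [entriesLinearMap_iterate_Rop_comm hU (fun k => (p k : ℂ))]
      ext a
      rw [conjTranspose_eigvecMatrix_mul_mul_apply, Complex.real_smul]
      push_cast
      ring
  have hsupport : (Finset.univ.filter fun a : Fin d × Fin d =>
      Complex.I * (p a.1 - p a.2 : ℂ) * (star (v a.1) ⬝ᵥ H *ᵥ v a.2) ≠ 0) =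
        Finset.univ.filter fun a => p a.1 ≠ p a.2 ∧ star (v a.1) ⬝ᵥ H *ᵥ v a.2 ≠ 0 :=
    Finset.filter_congr fun a _ => by simp [sub_eq_zero]
  rw [hstar.unique hleast, hsupport,
    show (fun a : Fin d × Fin d => (p a.1 + p a.2) / 2) = (· / 2) ∘ fun a => p a.1 + p a.2 from rfl,
    ← Finset.image_image,
    Finset.card_image_of_injective _ fun _ _ => (div_left_inj' two_ne_zero).mp]
  -- `convert` only reconciles the `Decidable` instances of the two filters
  convert card_image_add_filter_ne_zero p fun i j => star (v i) ⬝ᵥ H *ᵥ v j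

/-- Exact stabilization order: n* = 𝒩[S] − 𝒩[J]. -/
theorem stmt13 {d : ℕ} (ρ : Matrix (Fin d) (Fin d) ℂ) (p : Fin d → ℝ) (v : Fin d → (Fin d → ℂ))
    (hρ : ρ = ∑ k, (p k : ℂ) • vecMulVec (v k) (star (v k)))
    (horth : ∀ k l, star (v k) ⬝ᵥ v l = (if k = l then 1 else 0))
    (hppos : ∀ k, 0 ≤ p k) (hptr : ∑ k, p k = 1) (H : Matrix (Fin d) (Fin d) ℂ) (hH : H.IsHermitian)
    (nstar : ℕ) (hstar : IsLeast {n : ℕ | K ρ H (n + 1) = K ρ H n} nstar) :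
    nstar =
      ((Finset.univ.filter fun kl : Fin d × Fin d => p kl.1 ≠ p kl.2).image
        fun kl => p kl.1 + p kl.2).card -
      (((Finset.univ.filter fun kl : Fin d × Fin d => p kl.1 ≠ p kl.2).image
        fun kl => p kl.1 + p kl.2).filter fun μ =>
          ∀ i j, p i ≠ p j → p i + p j = μ →
            star (v i) ⬝ᵥ H.mulVec (v j) = 0).card :=
  stmt13_general ρ p v hρ horth H nstar hstar

end KST
end

section
/- For a pure state ρ = |ψ⟩⟨ψ|, the SLD is L = 2i[ρ,H] (indeed R_ρ(2i[ρ,H]) = i[ρ,H] on 𝒳), the stabilization order is n* = 1, and the first Krylov bound already equals the quantum Fisher information: B_1 = F_Q = 4(⟨ψ|H²|ψ⟩ − ⟨ψ|H|ψ⟩²). -/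
open Matrix BigOperators Finset
open scoped Classical

namespace KST

variable {d : ℕ}

lemma vmv_mulVec (a b x : Fin d → ℂ) :
    (vecMulVec a b) *ᵥ x = (b ⬝ᵥ x) • a := by
  ext i
  simp only [Matrix.mulVec, dotProduct, vecMulVec_apply, Pi.smul_apply, smul_eq_mul,
    Finset.sum_mul]
  exact Finset.sum_congr rfl fun j _ => by ring

lemma mul_vmv (M : Matrix (Fin d) (Fin d) ℂ) (a b : Fin d → ℂ) :
    M * vecMulVec a b = vecMulVec (M *ᵥ a) b := by
  ext i j
  simp only [Matrix.mul_apply, vecMulVec_apply, Matrix.mulVec, dotProduct, Finset.sum_mul]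
  exact Finset.sum_congr rfl fun k _ => by ring

lemma trace_mul_vmv (a b : Fin d → ℂ) (M : Matrix (Fin d) (Fin d) ℂ) :
    (vecMulVec a b * M).trace = b ⬝ᵥ (M *ᵥ a) := by
  simp only [Matrix.trace, Matrix.diag_apply, Matrix.mul_apply, vecMulVec_apply, dotProduct,
    Matrix.mulVec, Finset.mul_sum]
  rw [Finset.sum_comm]
  exact Finset.sum_congr rfl fun k _ => Finset.sum_congr rfl fun i _ => by ring

lemma sum_mulVec' {ι : Type*} (s : Finset ι) (M : ι → Matrix (Fin d) (Fin d) ℂ)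
    (x : Fin d → ℂ) : (∑ k ∈ s, M k) *ᵥ x = ∑ k ∈ s, (M k) *ᵥ x := by
  ext i
  simp only [Matrix.mulVec, dotProduct, Finset.sum_apply, Matrix.sum_apply, Finset.sum_mul]
  exact Finset.sum_comm

lemma mulVec_sum' {ι : Type*} (s : Finset ι) (M : Matrix (Fin d) (Fin d) ℂ)
    (f : ι → Fin d → ℂ) : M *ᵥ (∑ k ∈ s, f k) = ∑ k ∈ s, M *ᵥ f k := by
  simp only [← Matrix.mulVecLin_apply]
  exact map_sum _ _ _

lemma dot_sum' {ι : Type*} (s : Finset ι) (u : Fin d → ℂ) (f : ι → Fin d → ℂ) :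
    u ⬝ᵥ (∑ k ∈ s, f k) = ∑ k ∈ s, u ⬝ᵥ f k := by
  simp only [dotProduct, Finset.sum_apply, Finset.mul_sum]
  exact Finset.sum_comm

lemma complete (v : Fin d → Fin d → ℂ)
    (horth : ∀ k l, star (v k) ⬝ᵥ v l = (if k = l then 1 else 0)) (x : Fin d → ℂ) :
    ∑ k, (star (v k) ⬝ᵥ x) • v k = x := by
  set A : Matrix (Fin d) (Fin d) ℂ := Matrix.of (fun i k => v k i) with hA
  have h1 : Aᴴ * A = 1 := by
    ext k l
    have := horth k l
    simp only [dotProduct] at this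
    simpa [Matrix.mul_apply, Matrix.conjTranspose_apply, hA, Matrix.one_apply] using this
  have h2 : A * Aᴴ = 1 := mul_eq_one_comm.mp h1
  have h3 : A *ᵥ (Aᴴ *ᵥ x) = x := by rw [Matrix.mulVec_mulVec, h2, Matrix.one_mulVec]
  have hAd : Aᴴ *ᵥ x = fun k => star (v k) ⬝ᵥ x := by
    ext k
    simp [Matrix.mulVec, dotProduct, Matrix.conjTranspose_apply, hA]
  have hAv : ∀ y : Fin d → ℂ, A *ᵥ y = ∑ k, y k • v k := by
    intro y
    ext i
    simp only [Matrix.mulVec, dotProduct, hA, Matrix.of_apply, Finset.sum_apply,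
      Pi.smul_apply, smul_eq_mul]
    exact Finset.sum_congr rfl fun k _ => by ring
  calc ∑ k, (star (v k) ⬝ᵥ x) • v k = A *ᵥ (Aᴴ *ᵥ x) := by rw [hAd, hAv]
    _ = x := h3

lemma ofReal_smul_mat (r : ℝ) (M : Matrix (Fin d) (Fin d) ℂ) :
    ((r : ℂ)) • M = r • M := by
  ext i j
  simp [Complex.real_smul]

lemma sum_erase_eq_sub (g : Fin d → ℝ) (k0 : Fin d) :
    ∑ k ∈ Finset.univ.erase k0, g k = (∑ k, g k) - g k0 := by
  rw [eq_sub_iff_add_eq, Finset.sum_erase_add _ _ (Finset.mem_univ k0)]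

/-- For a pure state ρ = |ψ⟩⟨ψ| the SLD is L = 2i[ρ,H], the stabilization order is
n* = 1, and B_1 = F_Q = 4(⟨ψ|H²|ψ⟩ − ⟨ψ|H|ψ⟩²). -/
theorem stmt16 {d : ℕ} (ρ : Matrix (Fin d) (Fin d) ℂ) (p : Fin d → ℝ) (v : Fin d → (Fin d → ℂ))
    (hρ : ρ = ∑ k, (p k : ℂ) • vecMulVec (v k) (star (v k)))
    (horth : ∀ k l, star (v k) ⬝ᵥ v l = (if k = l then 1 else 0))
    (hppos : ∀ k, 0 ≤ p k) (hptr : ∑ k, p k = 1) (H : Matrix (Fin d) (Fin d) ℂ) (hH : H.IsHermitian)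
    (ψ : Fin d → ℂ) (hψ : star ψ ⬝ᵥ ψ = 1)
    (hpure : ρ = vecMulVec ψ (star ψ)) :
    memX p v ((2 : ℂ) • comm ρ H) ∧
    Rop ρ ((2 : ℂ) • comm ρ H) = comm ρ H ∧
    ((2 : ℂ) • comm ρ H) ∈ K ρ H 1 ∧
    (comm ρ H ≠ 0 → IsLeast {n : ℕ | K ρ H (n + 1) = K ρ H n} 1) ∧
    wip ρ ((2 : ℂ) • comm ρ H) ((2 : ℂ) • comm ρ H) =
      4 * ((star ψ ⬝ᵥ (H * H).mulVec ψ).re - ((star ψ ⬝ᵥ H.mulVec ψ).re) ^ 2) ∧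
    FQ p v H =
      4 * ((star ψ ⬝ᵥ (H * H).mulVec ψ).re - ((star ψ ⬝ᵥ H.mulVec ψ).re) ^ 2) := by
  classical
  -- basic pure-state facts
  have hρψ : ρ *ᵥ ψ = ψ := by rw [hpure, vmv_mulVec, hψ, one_smul]
  have hρy : ∀ y, ρ *ᵥ y = (star ψ ⬝ᵥ y) • ψ := fun y => by rw [hpure, vmv_mulVec]
  have hρρ : ρ * ρ = ρ := by
    nth_rewrite 2 [hpure]
    rw [mul_vmv, hρψ, ← hpure]
  have hρHerm : ρᴴ = ρ := by
    rw [hpure]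
    ext i j
    simp [Matrix.conjTranspose_apply, vecMulVec_apply, mul_comm]
  -- spectral facts
  have hsp : ∀ l, ρ *ᵥ v l = (p l : ℂ) • v l := by
    intro l
    rw [hρ, sum_mulVec']
    rw [Finset.sum_eq_single l]
    · rw [smul_mulVec, vmv_mulVec, horth l l]; simp
    · intro k _ hk
      rw [smul_mulVec, vmv_mulVec, horth k l]
      simp [hk]
    · simp
  have hspd : ∀ k z, star (v k) ⬝ᵥ (ρ *ᵥ z) = (p k : ℂ) * (star (v k) ⬝ᵥ z) := by
    intro k z
    rw [Matrix.dotProduct_mulVec]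
    have h := congrArg star (hsp k)
    rw [Matrix.star_mulVec, hρHerm, star_smul] at h
    rw [h, Complex.star_def, Complex.conj_ofReal, smul_dotProduct, smul_eq_mul]
  -- core identity ρc + cρ = c
  have hkey : ρ * comm ρ H + comm ρ H * ρ = comm ρ H := by
    simp only [comm, Matrix.mul_smul, Matrix.smul_mul, ← smul_add]
    congr 1
    simp only [Matrix.mul_sub, Matrix.sub_mul, ← Matrix.mul_assoc]
    rw [show ρ * ρ * H = ρ * H by rw [hρρ], show H * ρ * ρ = H * ρ by
      rw [Matrix.mul_assoc, hρρ]]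
    abel
  have hRhalf : Rop ρ (comm ρ H) = (1/2 : ℂ) • comm ρ H := by
    rw [Rop, hkey]
  -- part 2
  have part2 : Rop ρ ((2:ℂ) • comm ρ H) = comm ρ H := by
    rw [Rop, Matrix.mul_smul, Matrix.smul_mul, ← smul_add, smul_smul]
    norm_num
    exact hkey
  -- membership of comm in K 1
  have hcmem : comm ρ H ∈ K ρ H 1 := by
    apply Submodule.subset_span
    exact ⟨0, by simp, by simp⟩
  have h2smul : (2:ℂ) • comm ρ H = (2:ℝ) • comm ρ H := by
    rw [show (2:ℂ) = ((2:ℝ):ℂ) by norm_num, ofReal_smul_mat]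
  -- hermitian dot lemma
  have hherm : ∀ x y : Fin d → ℂ, star x ⬝ᵥ (H *ᵥ y) = star (star y ⬝ᵥ (H *ᵥ x)) := by
    intro x y
    conv_rhs => rw [Matrix.star_dotProduct, star_star, Matrix.star_mulVec, hH.eq,
      ← Matrix.dotProduct_mulVec]
  -- abbreviations
  set a := star ψ ⬝ᵥ (H *ᵥ ψ) with ha
  set b := star ψ ⬝ᵥ ((H * H) *ᵥ ψ) with hb
  have hb' : b = star ψ ⬝ᵥ (H *ᵥ (H *ᵥ ψ)) := by rw [hb, Matrix.mulVec_mulVec]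
  have haa : star a = a := by
    rw [ha]
    conv_lhs => rw [Matrix.star_dotProduct, star_star, Matrix.star_mulVec, hH.eq,
      ← Matrix.dotProduct_mulVec]
  have haim : a.im = 0 := by
    have := congrArg Complex.im haa
    simp only [Complex.star_def, Complex.conj_im] at this
    linarith
  refine ⟨⟨?_, ?_⟩, part2, ?_, ?_, ?_, ?_⟩
  · -- Hermitian
    have hch : (comm ρ H)ᴴ = comm ρ H := by
      simp only [comm, Matrix.conjTranspose_smul, Matrix.conjTranspose_sub,
        Matrix.conjTranspose_mul, hH.eq, hρHerm, Complex.star_def, Complex.conj_I,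
        neg_smul, ← smul_neg, neg_sub]
    show ((2:ℂ) • comm ρ H)ᴴ = (2:ℂ) • comm ρ H
    rw [Matrix.conjTranspose_smul, hch]
    norm_num
  · -- vanishing matrix elements
    intro k l hk hl
    show star (v k) ⬝ᵥ ((2:ℂ) • comm ρ H) *ᵥ (v l) = 0
    rw [smul_mulVec, dotProduct_smul]
    simp only [comm, smul_mulVec, dotProduct_smul]
    rw [Matrix.sub_mulVec, ← Matrix.mulVec_mulVec, ← Matrix.mulVec_mulVec,
      dotProduct_sub, hspd k, hk, hsp l, hl]
    simp
  · -- (2 : ℂ) • comm ∈ K 1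
    rw [h2smul]
    exact Submodule.smul_mem _ _ hcmem
  · -- IsLeast
    intro hne
    constructor
    · show K ρ H 2 = K ρ H 1
      apply le_antisymm
      · rw [K, Submodule.span_le]
        rintro x ⟨k, hk, rfl⟩
        simp only [Set.mem_Iio] at hk
        interval_cases k
        · exact hcmem
        · show (Rop ρ)^[1] (comm ρ H) ∈ K ρ H 1
          rw [Function.iterate_one, hRhalf]
          rw [show ((1:ℂ)/2) = (((1:ℝ)/2 : ℝ):ℂ) by norm_num, ofReal_smul_mat]
          exact Submodule.smul_mem _ _ hcmem
      · apply Submodule.span_mono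
        apply Set.image_mono
        intro k hk
        simp only [Set.mem_Iio] at hk ⊢
        omega
    · intro n hn
      by_contra hlt
      push_neg at hlt
      interval_cases n
      have h0 : K ρ H 0 = ⊥ := by
        rw [K, show Set.Iio (0:ℕ) = ∅ by ext x; simp, Set.image_empty,
          Submodule.span_empty]
      have hn' : K ρ H 1 = ⊥ := by
        simpa [h0] using hn
      have := hcmem
      rw [hn', Submodule.mem_bot] at this
      exact hne this
  · -- wip value
    have htr : ∀ M : Matrix (Fin d) (Fin d) ℂ, (ρ * M).trace = star ψ ⬝ᵥ (M *ᵥ ψ) := by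
      intro M
      rw [hpure, trace_mul_vmv]
    have hAψ : (ρ*H - H*ρ) *ᵥ ψ = a • ψ - H *ᵥ ψ := by
      rw [Matrix.sub_mulVec, ← Matrix.mulVec_mulVec, ← Matrix.mulVec_mulVec, hρψ,
        hρy (H *ᵥ ψ), ← ha]
    have hAAψ : ((ρ*H - H*ρ) * (ρ*H - H*ρ)) *ᵥ ψ = (a*a - b) • ψ := by
      rw [← Matrix.mulVec_mulVec, hAψ, Matrix.mulVec_sub, Matrix.mulVec_smul, hAψ,
        Matrix.sub_mulVec, ← Matrix.mulVec_mulVec, ← Matrix.mulVec_mulVec,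
        hρy (H *ᵥ (H *ᵥ ψ)), hρy (H *ᵥ ψ), ← hb', ← ha, Matrix.mulVec_smul]
      module
    have htrc : (ρ * ((ρ*H - H*ρ) * (ρ*H - H*ρ))).trace = a*a - b := by
      rw [htr, hAAψ, dotProduct_smul, hψ, smul_eq_mul, mul_one]
    have hXX : ((2:ℂ) • comm ρ H) * ((2:ℂ) • comm ρ H)
        = (-4:ℂ) • ((ρ*H - H*ρ) * (ρ*H - H*ρ)) := by
      simp only [comm, Matrix.smul_mul, Matrix.mul_smul, smul_smul]
      congr 1
      linear_combination (4:ℂ) * Complex.I_mul_I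
    show ((ρ * (((2:ℂ) • comm ρ H) * ((2:ℂ) • comm ρ H) + ((2:ℂ) • comm ρ H) * ((2:ℂ) • comm ρ H))).trace / 2).re = _
    rw [hXX, ← add_smul]
    rw [show (-4:ℂ) + -4 = -8 by norm_num]
    rw [Matrix.mul_smul, Matrix.trace_smul, htrc, smul_eq_mul]
    rw [show (-8:ℂ) * (a*a - b) / 2 = (-4:ℂ) * (a*a - b) by ring]
    simp only [Complex.mul_re, Complex.sub_re, Complex.sub_im, Complex.mul_im, haim]
    norm_num
    ring
  · -- FQ value
    have hstar2 : ∀ k, star ψ ⬝ᵥ v k = star (star (v k) ⬝ᵥ ψ) := fun k => by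
      rw [Matrix.star_dotProduct]
    have hpk : ∀ k, (p k : ℂ) = (star (v k) ⬝ᵥ ψ) * star (star (v k) ⬝ᵥ ψ) := by
      intro k
      have h1 : star (v k) ⬝ᵥ (ρ *ᵥ v k) = (p k : ℂ) := by
        rw [hsp k, dotProduct_smul, horth k k]
        simp
      rw [hρy (v k), dotProduct_smul, hstar2 k, smul_eq_mul] at h1
      rw [← h1]
      ring
    have hpns : ∀ k, p k = Complex.normSq (star (v k) ⬝ᵥ ψ) := by
      intro k
      have h := hpk k
      rw [Complex.star_def, Complex.mul_conj] at h
      exact_mod_cast h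
    have hcross : ∀ k l, k ≠ l → (star (v k) ⬝ᵥ ψ) * star (star (v l) ⬝ᵥ ψ) = 0 := by
      intro k l hkl
      have h1 : star (v k) ⬝ᵥ (ρ *ᵥ v l) = 0 := by
        rw [hsp l, dotProduct_smul, horth k l]
        simp [hkl]
      rw [hρy (v l), dotProduct_smul, hstar2 l, smul_eq_mul] at h1
      rw [← h1]
      ring
    obtain ⟨k0, hk0⟩ : ∃ k, p k ≠ 0 := by
      by_contra hcon
      push_neg at hcon
      rw [Finset.sum_eq_zero (fun k _ => hcon k)] at hptr
      norm_num at hptr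
    have hck0 : star (v k0) ⬝ᵥ ψ ≠ 0 := by
      intro h
      exact hk0 (by rw [hpns k0, h, Complex.normSq_zero])
    have hcl : ∀ l, l ≠ k0 → star (v l) ⬝ᵥ ψ = 0 := by
      intro l hl
      rcases mul_eq_zero.mp (hcross k0 l (Ne.symm hl)) with h' | h'
      · exact absurd h' hck0
      · exact star_eq_zero.mp h'
    have hpl : ∀ l, l ≠ k0 → p l = 0 := fun l hl => by
      rw [hpns l, hcl l hl, Complex.normSq_zero]
    have hpk0 : p k0 = 1 := by
      rw [← hptr, Finset.sum_eq_single k0 (fun k _ hk => hpl k hk) (by simp)]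
    have hψeq : ψ = (star (v k0) ⬝ᵥ ψ) • v k0 := by
      have h := complete v horth ψ
      rw [Finset.sum_eq_single k0] at h
      · exact h.symm
      · intro l _ hl
        rw [hcl l hl, zero_smul]
      · simp
    have hunit : (star (v k0) ⬝ᵥ ψ) * star (star (v k0) ⬝ᵥ ψ) = 1 := by
      have h := hpk k0
      rw [hpk0] at h
      exact_mod_cast h.symm
    have hEstar : ∀ k, star (v k) ⬝ᵥ (H *ᵥ v k0) = star (star (v k0) ⬝ᵥ (H *ᵥ v k)) :=
      fun k => hherm (v k) (v k0)
    have haval : a = star (v k0) ⬝ᵥ (H *ᵥ v k0) := by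
      rw [ha]
      conv_lhs => rw [hψeq]
      simp only [star_smul, smul_dotProduct, Matrix.mulVec_smul,
        dotProduct_smul, smul_eq_mul]
      linear_combination (star (v k0) ⬝ᵥ (H *ᵥ v k0)) * hunit
    have hbval : b = star (v k0) ⬝ᵥ ((H * H) *ᵥ v k0) := by
      rw [hb]
      conv_lhs => rw [hψeq]
      simp only [star_smul, smul_dotProduct, Matrix.mulVec_smul,
        dotProduct_smul, smul_eq_mul]
      linear_combination (star (v k0) ⬝ᵥ ((H * H) *ᵥ v k0)) * hunit
    have hsumb : star (v k0) ⬝ᵥ ((H * H) *ᵥ v k0)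
        = ∑ l, ((Complex.normSq (star (v k0) ⬝ᵥ (H *ᵥ v l)) : ℝ) : ℂ) := by
      rw [← Matrix.mulVec_mulVec]
      conv_lhs => rw [show H *ᵥ v k0 = ∑ l, (star (v l) ⬝ᵥ (H *ᵥ v k0)) • v l from
        (complete v horth _).symm]
      rw [mulVec_sum', dot_sum']
      refine Finset.sum_congr rfl fun l _ => ?_
      rw [Matrix.mulVec_smul, dotProduct_smul, smul_eq_mul, hEstar l, mul_comm,
        Complex.star_def, Complex.mul_conj]
    have hbre : b.re = ∑ l, Complex.normSq (star (v k0) ⬝ᵥ (H *ᵥ v l)) := by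
      rw [hbval, hsumb, ← Complex.ofReal_sum, Complex.ofReal_re]
    have hare : (a.re)^2 = Complex.normSq (star (v k0) ⬝ᵥ (H *ᵥ v k0)) := by
      rw [← haval, Complex.normSq_apply, haim]
      ring
    have hinner : ∀ k, (∑ l, if 0 < p k + p l then
          (p k - p l)^2 / (p k + p l) * Complex.normSq (star (v k) ⬝ᵥ H.mulVec (v l)) else 0)
        = (if k = k0 then
            (∑ l, Complex.normSq (star (v k0) ⬝ᵥ (H *ᵥ v l)))
              - Complex.normSq (star (v k0) ⬝ᵥ (H *ᵥ v k0))
           else Complex.normSq (star (v k0) ⬝ᵥ (H *ᵥ v k))) := by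
      intro k
      by_cases hk : k = k0
      · subst hk
        rw [if_pos rfl]
        have hk0term : (if 0 < p k + p k then
            (p k - p k)^2 / (p k + p k) * Complex.normSq (star (v k) ⬝ᵥ H.mulVec (v k))
            else 0) = 0 := by
          rw [hpk0]; norm_num
        have hterm2 : ∀ l ∈ Finset.univ.erase k, (if 0 < p k + p l then
            (p k - p l)^2 / (p k + p l) * Complex.normSq (star (v k) ⬝ᵥ H.mulVec (v l))
            else 0) = Complex.normSq (star (v k) ⬝ᵥ (H *ᵥ v l)) := by
          intro l hl
          rw [hpk0, hpl l (Finset.ne_of_mem_erase hl)]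
          norm_num
        rw [← Finset.sum_erase_add _ _ (Finset.mem_univ k), hk0term, add_zero,
          Finset.sum_congr rfl hterm2, sum_erase_eq_sub]
      · rw [if_neg hk]
        have hterm : ∀ l, (if 0 < p k + p l then
            (p k - p l)^2 / (p k + p l) * Complex.normSq (star (v k) ⬝ᵥ H.mulVec (v l)) else 0)
            = (if l = k0 then Complex.normSq (star (v k0) ⬝ᵥ (H *ᵥ v k)) else 0) := by
          intro l
          by_cases hl : l = k0
          · subst hl
            rw [hpk0, hpl k hk, if_pos (by norm_num), if_pos rfl, hEstar k,
              Complex.star_def, Complex.normSq_conj]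
            norm_num
          · rw [hpl k hk, hpl l hl, if_neg (by norm_num), if_neg hl]
        rw [Finset.sum_congr rfl fun l _ => hterm l]
        simp
    rw [FQ, Finset.sum_congr rfl fun k _ => hinner k,
      ← Finset.sum_erase_add _ _ (Finset.mem_univ k0), if_pos rfl,
      Finset.sum_congr rfl (fun k hk => if_neg (Finset.ne_of_mem_erase hk)),
      sum_erase_eq_sub, hbre, ← hare]
    ring

end KST
end

section
/- Each Taylor bound B_n^{Tay} = 2 tr(Σ_{l=0}^n (ρ⊗𝟙 − 𝟙⊗ρ)²(𝟙⊗𝟙 − ρ⊗𝟙 − 𝟙⊗ρ)^l S(H⊗H)) equals 2 Σ_{k,l} (p_k − p_l)² [Σ_{m=0}^n (1 − p_k − p_l)^m] |⟨k|H|l⟩|², and satisfies B_n^{Tay} ≤ F_Q for all n, with B_n^{Tay} → F_Q as n → ∞. -/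
/-!
Conjugating by `U ⊗ U`, where the columns of `U` are the eigenvectors `v k` of `ρ`, turns
`ρ ⊗ 1` and `1 ⊗ ρ` into the diagonal matrices `diag (p k)` and `diag (p l)`. The Taylor
polynomial then becomes diagonal with entries `(p k - p l) ^ 2 * ∑ m ≤ n, (1 - p k - p l) ^ m`,
and the swap operator pairs `⟨l|H|k⟩` with `⟨k|H|l⟩` into `|⟨k|H|l⟩|²`. For `k ≠ l` we have
`p k + p l ≤ 1`, so each coefficient is a nondecreasing partial sum of a geometric series with
limit `(p k - p l) ^ 2 / (p k + p l)`; the bound and the limit follow term by term.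
-/

open Matrix BigOperators Finset
open scoped Classical

namespace KST

variable {d : ℕ}

open Kronecker

/-- The swap operator on the two-fold tensor product. -/
noncomputable def swapOp (d : ℕ) : Matrix (Fin d × Fin d) (Fin d × Fin d) ℂ :=
  Matrix.of fun x y => if x.1 = y.2 ∧ x.2 = y.1 then 1 else 0

/-- Taylor bound B_n^{Tay}. -/
noncomputable def BTay (ρ H : Matrix (Fin d) (Fin d) ℂ) (n : ℕ) : ℝ :=
  (2 * (((∑ l ∈ Finset.range (n + 1),
      (ρ ⊗ₖ (1 : Matrix (Fin d) (Fin d) ℂ) - (1 : Matrix (Fin d) (Fin d) ℂ) ⊗ₖ ρ) ^ 2 *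
        (1 - ρ ⊗ₖ (1 : Matrix (Fin d) (Fin d) ℂ) - (1 : Matrix (Fin d) (Fin d) ℂ) ⊗ₖ ρ) ^ l) *
    (swapOp d * (H ⊗ₖ H))).trace)).re

open Filter Topology

section TaylorSum

variable {R S : Type*} [Ring R] [Ring S]

def taylorSum (x y : R) (n : ℕ) : R :=
  ∑ l ∈ range (n + 1), (x - y) ^ 2 * (1 - x - y) ^ l

theorem map_taylorSum {F : Type*} [FunLike F R S] [RingHomClass F R S] (f : F) (x y : R)
    (n : ℕ) : f (taylorSum x y n) = taylorSum (f x) (f y) n := by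
  simp [taylorSum]

theorem taylorSum_self (x : R) : taylorSum x x = 0 := by
  ext n
  simp [taylorSum]

theorem taylorSum_diagonal {ι : Type*} [Fintype ι] [DecidableEq ι] (a b : ι → R) (n : ℕ) :
    taylorSum (diagonal a) (diagonal b) n = diagonal fun i => taylorSum (a i) (b i) n := by
  have h := map_taylorSum (diagonalRingHom ι R) a b n
  simp only [diagonalRingHom_apply] at h
  rw [← h]
  congr 1
  ext i
  exact map_taylorSum (Pi.evalRingHom (fun _ => R) i) a b n

end TaylorSum

theorem taylorSum_eq_mul_geom_sum (a b : ℝ) (n : ℕ) :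
    taylorSum a b n = (a - b) ^ 2 * ∑ m ∈ range (n + 1), (1 - a - b) ^ m := by
  rw [taylorSum, mul_sum]

theorem monotone_taylorSum {a b : ℝ} (hab : a + b ≤ 1) : Monotone (taylorSum a b) :=
  monotone_nat_of_le_succ fun n => by
    unfold taylorSum
    rw [sum_range_succ _ (n + 1)]
    exact le_add_of_nonneg_right (mul_nonneg (sq_nonneg _) (pow_nonneg (by linarith) _))

noncomputable def fisherWeight (a b : ℝ) : ℝ :=
  if 0 < a + b then (a - b) ^ 2 / (a + b) else 0

theorem fisherWeight_self (a : ℝ) : fisherWeight a a = 0 := by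
  simp [fisherWeight]

theorem tendsto_taylorSum {a b : ℝ} (ha : 0 ≤ a) (hb : 0 ≤ b) (hab : a + b ≤ 1) :
    Tendsto (taylorSum a b) atTop (𝓝 (fisherWeight a b)) := by
  by_cases hpos : 0 < a + b
  · have hgeom := (hasSum_geometric_of_lt_one (r := 1 - a - b) (by linarith) (by linarith))
    have hlim := (hgeom.tendsto_sum_nat.comp (tendsto_add_atTop_nat 1)).const_mul ((a - b) ^ 2)
    rw [show 1 - (1 - a - b) = a + b by ring] at hlim
    simpa [funext (taylorSum_eq_mul_geom_sum a b), fisherWeight, hpos, div_eq_mul_inv] using hlim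
  · obtain ⟨rfl, rfl⟩ : a = 0 ∧ b = 0 := ⟨by linarith, by linarith⟩
    rw [taylorSum_self, fisherWeight_self]
    exact tendsto_const_nhds

section ProbabilityVector

variable {ι : Type*} [Fintype ι] {p : ι → ℝ}

theorem add_le_one_of_ne (hp : ∀ k, 0 ≤ p k) (hp1 : ∑ k, p k = 1) {k l : ι} (hkl : k ≠ l) :
    p k + p l ≤ 1 := by
  rw [← hp1, ← sum_pair hkl]
  exact sum_le_sum_of_subset_of_nonneg (subset_univ _) fun i _ _ => hp i

theorem tendsto_taylorSum_apply (hp : ∀ k, 0 ≤ p k) (hp1 : ∑ k, p k = 1) (k l : ι) :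
    Tendsto (taylorSum (p k) (p l)) atTop (𝓝 (fisherWeight (p k) (p l))) := by
  rcases eq_or_ne k l with rfl | hkl
  · rw [taylorSum_self, fisherWeight_self]
    exact tendsto_const_nhds
  · exact tendsto_taylorSum (hp k) (hp l) (add_le_one_of_ne hp hp1 hkl)

theorem taylorSum_apply_le_fisherWeight (hp : ∀ k, 0 ≤ p k) (hp1 : ∑ k, p k = 1) (k l : ι)
    (n : ℕ) : taylorSum (p k) (p l) n ≤ fisherWeight (p k) (p l) := by
  rcases eq_or_ne k l with rfl | hkl
  · rw [taylorSum_self, fisherWeight_self]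
    exact le_rfl
  · exact (monotone_taylorSum (add_le_one_of_ne hp hp1 hkl)).ge_of_tendsto
      (tendsto_taylorSum_apply hp hp1 k l) n

end ProbabilityVector

section Kronecker

variable {m : Type*} [Fintype m] [DecidableEq m] {R : Type*} [CommRing R] [StarRing R]

theorem conj_kronecker_one {U : Matrix m m R} (hU : U ∈ unitaryGroup m R) (A : Matrix m m R) :
    (U * A * star U) ⊗ₖ (1 : Matrix m m R) = U ⊗ₖ U * (A ⊗ₖ 1) * star (U ⊗ₖ U) := by
  rw [show star (U ⊗ₖ U) = star U ⊗ₖ star U from conjTranspose_kronecker U U,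
    ← mul_kronecker_mul, ← mul_kronecker_mul, mul_one, mem_unitaryGroup_iff.mp hU]

theorem one_kronecker_conj {U : Matrix m m R} (hU : U ∈ unitaryGroup m R) (A : Matrix m m R) :
    (1 : Matrix m m R) ⊗ₖ (U * A * star U) = U ⊗ₖ U * (1 ⊗ₖ A) * star (U ⊗ₖ U) := by
  rw [show star (U ⊗ₖ U) = star U ⊗ₖ star U from conjTranspose_kronecker U U,
    ← mul_kronecker_mul, ← mul_kronecker_mul, mul_one, mem_unitaryGroup_iff.mp hU]

end Kronecker

theorem swapOp_mul_apply (M : Matrix (Fin d × Fin d) (Fin d × Fin d) ℂ) (x y : Fin d × Fin d) :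
    (swapOp d * M) x y = M x.swap y := by
  simp [swapOp, mul_apply, Fintype.sum_prod_type, ite_and, Prod.swap]

theorem mul_swapOp_apply (M : Matrix (Fin d × Fin d) (Fin d × Fin d) ℂ) (x y : Fin d × Fin d) :
    (M * swapOp d) x y = M x y.swap := by
  simp [swapOp, mul_apply, Fintype.sum_prod_type, ite_and, Prod.swap]

theorem swapOp_mul_kronecker (A B : Matrix (Fin d) (Fin d) ℂ) :
    swapOp d * (A ⊗ₖ B) = B ⊗ₖ A * swapOp d := by
  ext x y
  rw [swapOp_mul_apply, mul_swapOp_apply]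
  simp [mul_comm]

theorem trace_diagonal_mul_swapOp_mul_kronecker (g : Fin d × Fin d → ℂ)
    (M : Matrix (Fin d) (Fin d) ℂ) :
    (diagonal g * (swapOp d * (M ⊗ₖ M))).trace = ∑ k, ∑ l, g (k, l) * (M l k * M k l) := by
  simp [trace, diagonal_mul, swapOp_mul_apply, Fintype.sum_prod_type]

theorem trace_taylorSum_conj_mul_swapOp {U : Matrix (Fin d) (Fin d) ℂ}
    (hU : U ∈ unitaryGroup (Fin d) ℂ) (a : Fin d → ℂ) (H : Matrix (Fin d) (Fin d) ℂ) (n : ℕ) :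
    (taylorSum ((U * diagonal a * star U) ⊗ₖ 1) (1 ⊗ₖ (U * diagonal a * star U)) n *
        (swapOp d * (H ⊗ₖ H))).trace =
      ∑ k, ∑ l, taylorSum (a k) (a l) n * ((star U * H * U) l k * (star U * H * U) k l) := by
  let W : unitaryGroup (Fin d × Fin d) ℂ := ⟨U ⊗ₖ U, kronecker_mem_unitary hU hU⟩
  have hconj : ∀ X, U ⊗ₖ U * X * star (U ⊗ₖ U) = Unitary.conjStarAlgAut ℂ _ W X := fun _ => rfl
  have hswap : star (U ⊗ₖ U) * (swapOp d * (H ⊗ₖ H)) * (U ⊗ₖ U) =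
      swapOp d * ((star U * H * U) ⊗ₖ (star U * H * U)) := by
    rw [show star (U ⊗ₖ U) = star U ⊗ₖ star U from conjTranspose_kronecker U U, ← mul_assoc,
      ← swapOp_mul_kronecker, mul_assoc, mul_assoc, ← mul_kronecker_mul, ← mul_kronecker_mul,
      mul_assoc (star U) H U]
  rw [conj_kronecker_one hU, one_kronecker_conj hU, hconj, hconj, ← map_taylorSum,
    ← hconj, ← diagonal_one, diagonal_kronecker_diagonal, diagonal_kronecker_diagonal,
    taylorSum_diagonal, mul_assoc, trace_mul_comm, ← mul_assoc, trace_mul_comm, hswap,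
    trace_diagonal_mul_swapOp_mul_kronecker]
  simp

theorem BTay_eq_trace_taylorSum (ρ H : Matrix (Fin d) (Fin d) ℂ) (n : ℕ) :
    BTay ρ H n = (2 * (taylorSum (ρ ⊗ₖ 1) (1 ⊗ₖ ρ) n * (swapOp d * (H ⊗ₖ H))).trace).re :=
  rfl

theorem BTay_eq_sum_normSq {ρ : Matrix (Fin d) (Fin d) ℂ} {p : Fin d → ℝ} {v : Fin d → Fin d → ℂ}
    (hρ : ρ = ∑ k, (p k : ℂ) • vecMulVec (v k) (star (v k)))
    (horth : ∀ k l, star (v k) ⬝ᵥ v l = if k = l then 1 else 0) {H : Matrix (Fin d) (Fin d) ℂ}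
    (hH : H.IsHermitian) (n : ℕ) :
    BTay ρ H n =
      2 * ∑ k, ∑ l, taylorSum (p k) (p l) n * Complex.normSq (star (v k) ⬝ᵥ H *ᵥ v l) := by
  let U : Matrix (Fin d) (Fin d) ℂ := of fun i k => v k i
  have hU : U ∈ unitaryGroup (Fin d) ℂ := mem_unitaryGroup_iff'.mpr <| by
    ext k l
    simpa [U, mul_apply, dotProduct, one_apply] using horth k l
  have hρU : ρ = U * diagonal (fun k => (p k : ℂ)) * star U := by
    ext i j
    simp [hρ, U, mul_apply, Matrix.sum_apply, vecMulVec_apply, diagonal_apply, mul_left_comm,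
      mul_assoc]
  have hM : (star U * H * U).IsHermitian := isHermitian_conjTranspose_mul_mul U hH
  have hM_apply : ∀ k l, (star U * H * U) k l = star (v k) ⬝ᵥ H *ᵥ v l := by
    intro k l
    simp only [U, mul_apply, star_apply, of_apply, RCLike.star_def, dotProduct, Pi.star_apply,
      mulVec, sum_mul, mul_sum, mul_assoc]
    exact sum_comm
  have hterm : ∀ k l, taylorSum (p k : ℂ) (p l) n * ((star U * H * U) l k * (star U * H * U) k l) =
      ((taylorSum (p k) (p l) n * Complex.normSq (star (v k) ⬝ᵥ H *ᵥ v l) : ℝ) : ℂ) := by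
    intro k l
    have hcast := map_taylorSum Complex.ofRealHom (p k) (p l) n
    simp only [Complex.ofRealHom_eq_coe] at hcast
    rw [← hM.apply l k, Complex.star_def, ← Complex.normSq_eq_conj_mul_self, hM_apply, ← hcast]
    push_cast
    rfl
  rw [BTay_eq_trace_taylorSum, hρU, trace_taylorSum_conj_mul_swapOp hU]
  simp_rw [hterm]
  norm_cast

theorem FQ_eq_sum_fisherWeight (p : Fin d → ℝ) (v : Fin d → Fin d → ℂ)
    (H : Matrix (Fin d) (Fin d) ℂ) :
    FQ p v H =
      2 * ∑ k, ∑ l, fisherWeight (p k) (p l) * Complex.normSq (star (v k) ⬝ᵥ H *ᵥ v l) := by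
  simp only [FQ, fisherWeight, ite_mul, zero_mul]

/-- Spectral formula for the Taylor bounds, B_n^{Tay} ≤ F_Q, and convergence to F_Q. -/
theorem stmt17 {d : ℕ} (ρ : Matrix (Fin d) (Fin d) ℂ) (p : Fin d → ℝ) (v : Fin d → (Fin d → ℂ))
    (hρ : ρ = ∑ k, (p k : ℂ) • vecMulVec (v k) (star (v k)))
    (horth : ∀ k l, star (v k) ⬝ᵥ v l = (if k = l then 1 else 0))
    (hppos : ∀ k, 0 ≤ p k) (hptr : ∑ k, p k = 1) (H : Matrix (Fin d) (Fin d) ℂ) (hH : H.IsHermitian) :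
    (∀ n : ℕ, BTay ρ H n =
      2 * ∑ k, ∑ l, (p k - p l) ^ 2 *
        (∑ m ∈ Finset.range (n + 1), (1 - p k - p l) ^ m) *
        Complex.normSq (star (v k) ⬝ᵥ H.mulVec (v l))) ∧
    (∀ n : ℕ, BTay ρ H n ≤ FQ p v H) ∧
    Filter.Tendsto (BTay ρ H) Filter.atTop (nhds (FQ p v H)) := by
  have hB := BTay_eq_sum_normSq hρ horth hH
  refine ⟨fun n => by simp_rw [hB, taylorSum_eq_mul_geom_sum], fun n => ?_, ?_⟩
  · rw [hB, FQ_eq_sum_fisherWeight]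
    gcongr with k _ l _
    exacts [Complex.normSq_nonneg _, taylorSum_apply_le_fisherWeight hppos hptr k l n]
  · rw [funext hB, FQ_eq_sum_fisherWeight]
    exact (tendsto_finsetSum _ fun k _ => tendsto_finsetSum _ fun l _ =>
      (tendsto_taylorSum_apply hppos hptr k l).mul_const _).const_mul 2

end KST
end
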